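/- arXiv:1211.2473 — 8 statements merged into one kernel-verified Lean document; each statement's English description precedes it below -/
import Mathlib

section
/- Let (S,F,μ) be a probability space, A ⊆ F a sub-σ-algebra such that (S,A,μ) is separable (A has a countable dense subset with respect to the pseudometric d(X,Y) = μ(X Δ Y)), and W : S² → ℝ a bounded F⊗F-measurable function. If g is a version of the conditional expectation E(W | A⊗F), then for μ-almost every y ∈ S, the slice function x ↦ g(x,y) is a version of the conditional expectation E(W_y | A), where W_y(x) = W(x,y). -/
/-!
Integrating the defining identity of `E(W | 𝒜 ⊗ F)` over rectangles `A ×ˢ B` and applying Fubini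
shows that for each `𝒜`-measurable `A`, `∫_A g(x, y) dμ(x) = ∫_A W(x, y) dμ(x)` for a.e. `y`.
The exceptional null sets can only be collected over countably many `A`, which is where
separability enters: set integrals of an integrable function depend continuously on the set for
the pseudometric `μ(A ∆ B)`, so the identity passes from a countable dense family to all
`𝒜`-measurable sets, and this characterises `E(W_y | 𝒜)`.
-/

open MeasureTheory Filter Topology
open scoped ENNReal symmDiff

section SymmDiff

variable {α E : Type*} [MeasurableSpace α] [NormedAddCommGroup E] [NormedSpace ℝ E]
  {μ : Measure α} {f : α → E}

theorem setIntegral_sub_setIntegral_eq (hf : Integrable f μ) {s t : Set α}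
    (hs : MeasurableSet s) (ht : MeasurableSet t) :
    ∫ x in s, f x ∂μ - ∫ x in t, f x ∂μ = ∫ x in s \ t, f x ∂μ - ∫ x in t \ s, f x ∂μ := by
  have hs_split := integral_inter_add_sdiff ht (hf.integrableOn (s := s))
  have ht_split := integral_inter_add_sdiff hs (hf.integrableOn (s := t))
  rw [Set.inter_comm] at ht_split
  rw [← hs_split, ← ht_split]
  abel

theorem tendsto_setIntegral_of_tendsto_measure_symmDiff {ι : Type*} {l : Filter ι}
    (hf : Integrable f μ) {s : Set α} {t : ι → Set α} (hs : MeasurableSet s)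
    (ht : ∀ i, MeasurableSet (t i)) (hst : Tendsto (fun i => μ (s ∆ t i)) l (𝓝 0)) :
    Tendsto (fun i => ∫ x in t i, f x ∂μ) l (𝓝 (∫ x in s, f x ∂μ)) := by
  have small {u : ι → Set α} (hu : ∀ i, u i ⊆ s ∆ t i) :
      Tendsto (fun i => ∫ x in u i, f x ∂μ) l (𝓝 0) :=
    hf.tendsto_setIntegral_nhds_zero <| tendsto_of_tendsto_of_tendsto_of_le_of_le
      tendsto_const_nhds hst (fun _ => zero_le) fun i => measure_mono (hu i)
  have hdiff : Tendsto (fun i => ∫ x in s, f x ∂μ - ∫ x in t i, f x ∂μ) l (𝓝 0) := by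
    simp_rw [setIntegral_sub_setIntegral_eq hf hs (ht _)]
    simpa using (small fun i => Set.subset_union_left).sub (small fun i => Set.subset_union_right)
  simpa using (tendsto_const_nhds (x := ∫ x in s, f x ∂μ)).sub hdiff

theorem setIntegral_eq_of_forall_exists_measure_symmDiff_lt {g : α → E} [CompleteSpace E]
    (hf : Integrable f μ) (hg : Integrable g μ) {D : Set (Set α)}
    (hD : ∀ t ∈ D, MeasurableSet t) (hfg : ∀ t ∈ D, ∫ x in t, f x ∂μ = ∫ x in t, g x ∂μ)
    {s : Set α} (hs : MeasurableSet s) (hsD : ∀ ε : ℝ≥0∞, 0 < ε → ∃ t ∈ D, μ (s ∆ t) < ε) :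
    ∫ x in s, f x ∂μ = ∫ x in s, g x ∂μ := by
  obtain ⟨ε, -, hε_pos, hε⟩ := exists_seq_strictAnti_tendsto' (zero_lt_one' ℝ≥0∞)
  choose t htD hst using fun n => hsD (ε n) (hε_pos n).1
  have hlim : Tendsto (fun n => μ (s ∆ t n)) atTop (𝓝 0) :=
    tendsto_of_tendsto_of_tendsto_of_le_of_le tendsto_const_nhds hε (fun _ => zero_le)
      fun n => (hst n).le
  have htm : ∀ n, MeasurableSet (t n) := fun n => hD _ (htD n)
  refine tendsto_nhds_unique (tendsto_setIntegral_of_tendsto_measure_symmDiff hf hs htm hlim) ?_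
  simpa only [hfg _ (htD _)] using tendsto_setIntegral_of_tendsto_measure_symmDiff hg hs htm hlim

end SymmDiff

section Prod

variable {α β E : Type*} [MeasurableSpace α] [MeasurableSpace β]
  [NormedAddCommGroup E] [NormedSpace ℝ E]
  {μ : Measure α} {ν : Measure β} [SFinite μ] [SFinite ν]

theorem setIntegral_prod_symm (u : α × β → E) {s : Set α} {t : Set β}
    (hu : IntegrableOn u (s ×ˢ t) (μ.prod ν)) :
    ∫ z in s ×ˢ t, u z ∂μ.prod ν = ∫ y in t, ∫ x in s, u (x, y) ∂μ ∂ν := by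
  rw [IntegrableOn, ← Measure.prod_restrict] at hu
  rw [← Measure.prod_restrict]
  exact integral_prod_symm u hu

theorem ae_setIntegral_slice_eq_of_setIntegral_prod_eq [CompleteSpace E] {u v : α × β → E}
    (hu : Integrable u (μ.prod ν)) (hv : Integrable v (μ.prod ν)) {s : Set α}
    (huv : ∀ t, MeasurableSet t → ∫ z in s ×ˢ t, u z ∂μ.prod ν = ∫ z in s ×ˢ t, v z ∂μ.prod ν) :
    (fun y => ∫ x in s, u (x, y) ∂μ) =ᵐ[ν] fun y => ∫ x in s, v (x, y) ∂μ := by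
  have slice_integrable {w : α × β → E} (hw : Integrable w (μ.prod ν)) :
      Integrable (fun y => ∫ x in s, w (x, y) ∂μ) ν := by
    refine Integrable.integral_prod_right (f := w) ?_
    rw [Measure.restrict_prod_eq_prod_univ]
    exact hw.integrableOn
  refine (slice_integrable hu).ae_eq_of_forall_setIntegral_eq _ _ (slice_integrable hv)
    fun t ht _ => ?_
  rw [← setIntegral_prod_symm u hu.integrableOn, ← setIntegral_prod_symm v hv.integrableOn]
  exact huv t ht

end Prod

section CondExpSlice

variable {α β E : Type*} {m m₀ : MeasurableSpace α} [MeasurableSpace β]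
  [NormedAddCommGroup E] [NormedSpace ℝ E] [CompleteSpace E]
  {μ : Measure α} {ν : Measure β} [IsFiniteMeasure μ] [IsFiniteMeasure ν]

theorem ae_slice_ae_eq_condExp_slice (hm : m ≤ m₀)
    (hsep : ∃ D : Set (Set α), D.Countable ∧ (∀ s ∈ D, MeasurableSet[m] s) ∧
      ∀ s, MeasurableSet[m] s → ∀ ε : ℝ≥0∞, 0 < ε → ∃ t ∈ D, μ (s ∆ t) < ε)
    {W g : α × β → E} (hW : Integrable W (μ.prod ν))
    (hg_meas : StronglyMeasurable[m.prod ‹_›] g)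
    (hg : g =ᵐ[μ.prod ν] (μ.prod ν)[W | m.prod ‹_›]) :
    ∀ᵐ y ∂ν, (fun x => g (x, y)) =ᵐ[μ] μ[fun x => W (x, y) | m] := by
  have hm_prod : m.prod ‹MeasurableSpace β› ≤ m₀.prod ‹_› :=
    sup_le_sup (MeasurableSpace.comap_mono hm) le_rfl
  have hg_int : Integrable g (μ.prod ν) := integrable_condExp.congr hg.symm
  have h_rect : ∀ s, MeasurableSet[m] s → ∀ t, MeasurableSet t →
      ∫ z in s ×ˢ t, g z ∂μ.prod ν = ∫ z in s ×ˢ t, W z ∂μ.prod ν := fun s hs t ht =>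
    (integral_congr_ae (ae_restrict_of_ae hg)).trans (setIntegral_condExp hm_prod hW (hs.prod ht))
  obtain ⟨D, hD_countable, hD_meas, hD_dense⟩ := hsep
  have h_dense : ∀ᵐ y ∂ν, ∀ s ∈ D, ∫ x in s, g (x, y) ∂μ = ∫ x in s, W (x, y) ∂μ :=
    (ae_ball_iff hD_countable).2 fun s hs =>
      ae_setIntegral_slice_eq_of_setIntegral_prod_eq hg_int hW (h_rect s (hD_meas s hs))
  filter_upwards [h_dense, hg_int.prod_left_ae, hW.prod_left_ae] with y hy hgy hWy
  refine ae_eq_condExp_of_forall_setIntegral_eq hm hWy (fun _ _ _ => hgy.integrableOn)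
    (fun s hs _ => ?_)
    (hg_meas.comp_measurable measurable_prodMk_right).aestronglyMeasurable
  exact setIntegral_eq_of_forall_exists_measure_symmDiff_lt hgy hWy
    (fun t ht => hm _ (hD_meas t ht)) hy (hm _ hs) (hD_dense s hs)

end CondExpSlice

theorem stmt4 {S : Type*} (𝒜 : MeasurableSpace S) {F : MeasurableSpace S}
    (μ : Measure S) [IsProbabilityMeasure μ] (h𝒜 : 𝒜 ≤ F)
    (hsep : ∃ D : Set (Set S), D.Countable ∧ (∀ X ∈ D, MeasurableSet[𝒜] X) ∧
      ∀ X : Set S, MeasurableSet[𝒜] X → ∀ ε : ℝ≥0∞, 0 < ε → ∃ Y ∈ D, μ (X ∆ Y) < ε)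
    (W : S × S → ℝ) (C : ℝ) (hbd : ∀ p, |W p| ≤ C) (hWmeas : Measurable[F.prod F] W)
    (g : S × S → ℝ) (hgmeas : Measurable[𝒜.prod F] g)
    (hg : g =ᵐ[μ.prod μ] (μ.prod μ)[W | 𝒜.prod F]) :
    ∀ᵐ y ∂μ, (fun x => g (x, y)) =ᵐ[μ] μ[(fun x => W (x, y)) | 𝒜] := by
  have hW : Integrable W (μ.prod μ) :=
    .of_bound hWmeas.aestronglyMeasurable C
      (.of_forall fun p => (Real.norm_eq_abs _).trans_le (hbd p))
  exact ae_slice_ae_eq_condExp_slice h𝒜 hsep hW hgmeas.stronglyMeasurable hg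
end

section
/- Let (S,F,μ) be a probability space and A ⊆ F a sub-σ-algebra. Let W : S² → ℝ be a bounded F⊗F-measurable function that is equal almost everywhere to an A⊗F-measurable function and also equal almost everywhere to an F⊗A-measurable function. Then W is equal almost everywhere to a version of E(W | A⊗A). -/
/-!
Let `k = E[W | 𝒜 ⊗ 𝒜]`. On a rectangle `B × C` with `B ∈ F`, `C ∈ 𝒜`, Fubini lets one replace
`1_B` by `b = E[1_B | 𝒜]` when integrating against any function whose sections `x ↦ u (x, y)` are
`𝒜`-measurable; this applies both to `k` and to the `𝒜 ⊗ F`-measurable version `g` of `W`. Since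
`b(x) 1_C(y)` is `𝒜 ⊗ 𝒜`-measurable, `k` and `g` then have the same integral over `B × C`, so by a
π-λ argument `k = E[g | F ⊗ 𝒜] = E[W | F ⊗ 𝒜]`, which is the `F ⊗ 𝒜`-measurable version `h` of `W`.
-/

open MeasureTheory

theorem MeasurableSpace.prod_mono {α β : Type*} {m₁ m₂ : MeasurableSpace α}
    {n₁ n₂ : MeasurableSpace β} (hm : m₁ ≤ m₂) (hn : n₁ ≤ n₂) : m₁.prod n₁ ≤ m₂.prod n₂ :=
  sup_le_sup (comap_mono hm) (comap_mono hn)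

theorem Set.abs_indicator_one_le {α : Type*} (B : Set α) (x : α) :
    |B.indicator (1 : α → ℝ) x| ≤ 1 := by
  by_cases hx : x ∈ B <;> simp [hx]

namespace MeasureTheory

variable {α β E : Type*} {m m₀ : MeasurableSpace α} {μ : Measure α}
  [NormedAddCommGroup E] [NormedSpace ℝ E]

theorem setIntegral_eq_of_isPiSystem {s : Set (Set α)} {f g : α → E} (hm : m ≤ m₀)
    (hf : Integrable f μ) (hg : Integrable g μ) (h_gen : m = MeasurableSpace.generateFrom s)
    (h_pi : IsPiSystem s) (h_basic : ∀ t ∈ s, ∫ x in t, f x ∂μ = ∫ x in t, g x ∂μ)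
    (h_univ : ∫ x, f x ∂μ = ∫ x, g x ∂μ) {t : Set α} (ht : MeasurableSet[m] t) :
    ∫ x in t, f x ∂μ = ∫ x in t, g x ∂μ := by
  induction t, ht using MeasurableSpace.induction_on_inter h_gen h_pi with
  | empty => simp
  | basic t ht => exact h_basic t ht
  | compl t ht h_eq =>
    rw [setIntegral_compl (hm t ht) hf, setIntegral_compl (hm t ht) hg, h_eq, h_univ]
  | iUnion t h_disj ht h_eq =>
    rw [integral_iUnion (fun i ↦ hm _ (ht i)) h_disj hf.integrableOn,
      integral_iUnion (fun i ↦ hm _ (ht i)) h_disj hg.integrableOn]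
    exact tsum_congr h_eq

theorem integral_mul_eq_integral_condExp_mul (hm : m ≤ m₀) [SigmaFinite (μ.trim hm)]
    {f v : α → ℝ} (hv : StronglyMeasurable[m] v) (hf : Integrable f μ)
    (hfv : Integrable (fun x ↦ f x * v x) μ) :
    ∫ x, f x * v x ∂μ = ∫ x, (μ[f | m]) x * v x ∂μ := by
  have hvf : Integrable (v * f) μ := mul_comm f v ▸ hfv
  calc ∫ x, f x * v x ∂μ = ∫ x, (v * f) x ∂μ := by simp only [Pi.mul_apply, mul_comm]
    _ = ∫ x, (μ[v * f | m]) x ∂μ := (integral_condExp hm).symm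
    _ = ∫ x, (v * μ[f | m]) x ∂μ :=
      integral_congr_ae (condExp_mul_of_stronglyMeasurable_left hv hvf hf)
    _ = ∫ x, (μ[f | m]) x * v x ∂μ := by simp only [Pi.mul_apply, mul_comm]

theorem Integrable.comp_fst_mul {mβ : MeasurableSpace β} {ν : Measure β} [SFinite ν]
    {f : α → ℝ} {c : ℝ} (hf : AEStronglyMeasurable f μ) (hf_bdd : ∀ᵐ x ∂μ, |f x| ≤ c)
    {u : α × β → ℝ} (hu : Integrable u (μ.prod ν)) :
    Integrable (fun z ↦ f z.1 * u z) (μ.prod ν) :=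
  hu.bdd_mul hf.comp_fst (Measure.quasiMeasurePreserving_fst.ae hf_bdd)

theorem integral_comp_fst_mul_eq_integral_condExp_comp_fst_mul {mβ : MeasurableSpace β}
    {ν : Measure β} [IsFiniteMeasure μ] [SFinite ν] (hm : m ≤ m₀) {f : α → ℝ} {c : ℝ}
    (hf : AEStronglyMeasurable f μ) (hf_bdd : ∀ᵐ x ∂μ, |f x| ≤ c) {u : α × β → ℝ}
    (hu : Integrable u (μ.prod ν)) (hu_sec : ∀ y, StronglyMeasurable[m] fun x ↦ u (x, y)) :
    ∫ z, f z.1 * u z ∂(μ.prod ν) = ∫ z, (μ[f | m]) z.1 * u z ∂(μ.prod ν) := by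
  have hf_int : Integrable f μ := .of_bound hf c (by simpa only [Real.norm_eq_abs] using hf_bdd)
  rw [integral_prod_symm _ (hu.comp_fst_mul hf hf_bdd),
    integral_prod_symm _ (hu.comp_fst_mul integrable_condExp.aestronglyMeasurable
      (ae_bdd_abs_condExp_of_ae_bdd_abs hf_bdd))]
  refine integral_congr_ae ?_
  filter_upwards [hu.prod_left_ae] with y hy
  exact integral_mul_eq_integral_condExp_mul hm (hu_sec y) hf_int
    (hy.bdd_mul hf (by simpa only [Real.norm_eq_abs] using hf_bdd))

theorem Integrable.indicator_comp_snd_mul {mα : MeasurableSpace α} {mβ : MeasurableSpace β}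
    {ρ : Measure (α × β)} {C : Set β} (hC : MeasurableSet C) {u : α × β → ℝ}
    (hu : Integrable u ρ) : Integrable (fun z ↦ C.indicator 1 z.2 * u z) ρ :=
  (hu.indicator (measurable_snd hC)).congr <| .of_forall fun z ↦ by
    by_cases hz : z.2 ∈ C <;> simp [hz]

theorem setIntegral_prod_eq_integral_indicator_mul {mα : MeasurableSpace α}
    {mβ : MeasurableSpace β} {ρ : Measure (α × β)} {B : Set α} {C : Set β}
    (hB : MeasurableSet B) (hC : MeasurableSet C) (u : α × β → ℝ) :
    ∫ z in B ×ˢ C, u z ∂ρ = ∫ z, B.indicator 1 z.1 * (C.indicator 1 z.2 * u z) ∂ρ := by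
  rw [← integral_indicator (hB.prod hC)]
  congr 1 with z
  by_cases h₁ : z.1 ∈ B <;> by_cases h₂ : z.2 ∈ C <;> simp [h₁, h₂]

theorem setIntegral_prod_condExp_prod_of_stronglyMeasurable_left {n mβ : MeasurableSpace β}
    {ν : Measure β} [IsFiniteMeasure μ] [IsFiniteMeasure ν] (hm : m ≤ m₀) (hn : n ≤ mβ)
    {g : α × β → ℝ} (hg : StronglyMeasurable[m.prod mβ] g) (hg_int : Integrable g (μ.prod ν))
    {B : Set α} (hB : MeasurableSet B) {C : Set β} (hC : MeasurableSet[n] C) :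
    ∫ z in B ×ˢ C, ((μ.prod ν)[g | m.prod n]) z ∂(μ.prod ν) = ∫ z in B ×ˢ C, g z ∂(μ.prod ν) := by
  set k := (μ.prod ν)[g | m.prod n]
  have hk_sec : ∀ y, StronglyMeasurable[m] fun x ↦ k (x, y) := fun y ↦
    stronglyMeasurable_condExp.comp_measurable (@measurable_prodMk_right _ _ m n y)
  have hg_sec : ∀ y, StronglyMeasurable[m] fun x ↦ g (x, y) := fun y ↦
    hg.comp_measurable (@measurable_prodMk_right _ _ m mβ y)
  have hB_bdd : ∀ᵐ x ∂μ, |B.indicator (1 : α → ℝ) x| ≤ 1 :=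
    .of_forall B.abs_indicator_one_le
  have hB_meas : AEStronglyMeasurable (B.indicator (1 : α → ℝ)) μ :=
    (measurable_const.indicator hB).aestronglyMeasurable
  set b := μ[B.indicator (1 : α → ℝ) | m]
  have hφ : StronglyMeasurable[m.prod n] fun z : α × β ↦ b z.1 * C.indicator 1 z.2 :=
    StronglyMeasurable.mul (f := fun z : α × β ↦ b z.1) (g := fun z : α × β ↦ C.indicator 1 z.2)
      (stronglyMeasurable_condExp.comp_measurable (@measurable_fst _ _ m n))
      ((measurable_const.indicator hC).comp (@measurable_snd _ _ m n)).stronglyMeasurable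
  have hb_int : Integrable (fun z ↦ b z.1 * (C.indicator 1 z.2 * g z)) (μ.prod ν) :=
    (hg_int.indicator_comp_snd_mul (hn C hC)).comp_fst_mul
      integrable_condExp.aestronglyMeasurable (ae_bdd_abs_condExp_of_ae_bdd_abs hB_bdd)
  have hgφ : Integrable (fun z ↦ g z * (b z.1 * C.indicator 1 z.2)) (μ.prod ν) :=
    hb_int.congr <| .of_forall fun z ↦ by ring
  have hC_sec : ∀ (u : α × β → ℝ), (∀ y, StronglyMeasurable[m] fun x ↦ u (x, y)) →
      ∀ y, StronglyMeasurable[m] fun x ↦ C.indicator 1 y * u (x, y) :=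
    fun u hu y ↦ stronglyMeasurable_const.mul (hu y)
  calc ∫ z in B ×ˢ C, k z ∂(μ.prod ν)
      = ∫ z, B.indicator 1 z.1 * (C.indicator 1 z.2 * k z) ∂(μ.prod ν) :=
        setIntegral_prod_eq_integral_indicator_mul hB (hn C hC) k
    _ = ∫ z, b z.1 * (C.indicator 1 z.2 * k z) ∂(μ.prod ν) :=
        integral_comp_fst_mul_eq_integral_condExp_comp_fst_mul hm hB_meas hB_bdd
          (integrable_condExp.indicator_comp_snd_mul (hn C hC)) (hC_sec k hk_sec)
    _ = ∫ z, k z * (b z.1 * C.indicator 1 z.2) ∂(μ.prod ν) := by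
        congr 1 with z; ring
    _ = ∫ z, g z * (b z.1 * C.indicator 1 z.2) ∂(μ.prod ν) :=
        (integral_mul_eq_integral_condExp_mul (MeasurableSpace.prod_mono hm hn) hφ hg_int hgφ).symm
    _ = ∫ z, b z.1 * (C.indicator 1 z.2 * g z) ∂(μ.prod ν) := by
        congr 1 with z; ring
    _ = ∫ z, B.indicator 1 z.1 * (C.indicator 1 z.2 * g z) ∂(μ.prod ν) :=
        (integral_comp_fst_mul_eq_integral_condExp_comp_fst_mul hm hB_meas hB_bdd
          (hg_int.indicator_comp_snd_mul (hn C hC)) (hC_sec g hg_sec)).symm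
    _ = ∫ z in B ×ˢ C, g z ∂(μ.prod ν) :=
        (setIntegral_prod_eq_integral_indicator_mul hB (hn C hC) g).symm

theorem condExp_prod_ae_eq_condExp_prod_of_stronglyMeasurable_left {n mβ : MeasurableSpace β}
    {ν : Measure β} [IsFiniteMeasure μ] [IsFiniteMeasure ν] (hm : m ≤ m₀) (hn : n ≤ mβ)
    {g : α × β → ℝ} (hg : StronglyMeasurable[m.prod mβ] g) (hg_int : Integrable g (μ.prod ν)) :
    (μ.prod ν)[g | m.prod n] =ᵐ[μ.prod ν] (μ.prod ν)[g | m₀.prod n] := by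
  have hαn : m₀.prod n ≤ m₀.prod mβ := MeasurableSpace.prod_mono le_rfl hn
  refine ae_eq_condExp_of_forall_setIntegral_eq hαn hg_int
    (fun _ _ _ ↦ integrable_condExp.integrableOn) (fun s hs _ ↦ ?_)
    (stronglyMeasurable_condExp.mono (MeasurableSpace.prod_mono hm le_rfl)).aestronglyMeasurable
  refine setIntegral_eq_of_isPiSystem hαn integrable_condExp hg_int
    (@generateFrom_prod _ _ m₀ n).symm (@isPiSystem_prod _ _ m₀ n) ?_
    (integral_condExp (MeasurableSpace.prod_mono hm hn)) hs
  rintro _ ⟨B, hB, C, hC, rfl⟩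
  exact setIntegral_prod_condExp_prod_of_stronglyMeasurable_left hm hn hg hg_int hB hC

end MeasureTheory

theorem stmt5_general {S : Type*} (𝒜 : MeasurableSpace S) {F : MeasurableSpace S}
    (μ : Measure S) [IsProbabilityMeasure μ] (h𝒜 : 𝒜 ≤ F)
    (W : S × S → ℝ) (C : ℝ) (hbd : ∀ p, |W p| ≤ C)
    (g : S × S → ℝ) (hgmeas : Measurable[𝒜.prod F] g) (hWg : W =ᵐ[μ.prod μ] g)
    (h : S × S → ℝ) (hhmeas : Measurable[F.prod 𝒜] h) (hWh : W =ᵐ[μ.prod μ] h) :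
    W =ᵐ[μ.prod μ] (μ.prod μ)[W | 𝒜.prod 𝒜] := by
  have hFA : F.prod 𝒜 ≤ F.prod F := MeasurableSpace.prod_mono le_rfl h𝒜
  have hg_meas : Measurable g := hgmeas.mono (MeasurableSpace.prod_mono h𝒜 le_rfl) le_rfl
  have hW_int : Integrable W (μ.prod μ) :=
    .of_bound (hg_meas.aestronglyMeasurable.congr hWg.symm) C
      (.of_forall fun p ↦ (Real.norm_eq_abs _).trans_le (hbd p))
  calc W =ᵐ[μ.prod μ] h := hWh
    _ = (μ.prod μ)[h | F.prod 𝒜] :=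
      (condExp_of_stronglyMeasurable hFA hhmeas.stronglyMeasurable (hW_int.congr hWh)).symm
    _ =ᵐ[μ.prod μ] (μ.prod μ)[g | F.prod 𝒜] := condExp_congr_ae (hWh.symm.trans hWg)
    _ =ᵐ[μ.prod μ] (μ.prod μ)[g | 𝒜.prod 𝒜] :=
      (condExp_prod_ae_eq_condExp_prod_of_stronglyMeasurable_left h𝒜 h𝒜
        hgmeas.stronglyMeasurable (hW_int.congr hWg)).symm
    _ =ᵐ[μ.prod μ] (μ.prod μ)[W | 𝒜.prod 𝒜] := condExp_congr_ae hWg.symm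

theorem stmt5 {S : Type*} (𝒜 : MeasurableSpace S) {F : MeasurableSpace S}
    (μ : Measure S) [IsProbabilityMeasure μ] (h𝒜 : 𝒜 ≤ F)
    (W : S × S → ℝ) (C : ℝ) (hbd : ∀ p, |W p| ≤ C) (hWmeas : Measurable[F.prod F] W)
    (g : S × S → ℝ) (hgmeas : Measurable[𝒜.prod F] g) (hWg : W =ᵐ[μ.prod μ] g)
    (h : S × S → ℝ) (hhmeas : Measurable[F.prod 𝒜] h) (hWh : W =ᵐ[μ.prod μ] h) :
    W =ᵐ[μ.prod μ] (μ.prod μ)[W | 𝒜.prod 𝒜] :=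
  stmt5_general 𝒜 μ h𝒜 W C hbd g hgmeas hWg h hhmeas hWh
end

section
/- Let f : (S,F,μ,◁) → (S',F',μ',◁') be an inclusion of ordered probability spaces, let W be a poset kernel on S, and set A = f⁻¹(F'). If W is equal μ⊗μ-almost everywhere to a version of E(W | A⊗A), then there exists a function U : S'² → [0,1], F'⊗F'-measurable, satisfying the kernel axioms almost everywhere on (S',μ'), such that W(x,y) = U(f(x),f(y)) for μ⊗μ-almost every (x,y). -/
/-!
A function that coincides a.e. with its conditional expectation on `𝒜 ⊗ 𝒜 = (f × f)⁻¹(F' ⊗ F')`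
is a.e. equal to a `(f × f)⁻¹(F' ⊗ F')`-measurable function, which by Doob–Dynkin factors as
`U ∘ (f × f)` with `U` measurable; clamping `U` to `[0, 1]` keeps this. Since `f × f` and
`f × f × f` are measure preserving, the kernel axioms of `W` push forward to almost-everywhere
axioms of `U`, the first one using that `f` preserves the order off a null set.
-/

open MeasureTheory

namespace MeasureTheory

variable {α β : Type*} {mα : MeasurableSpace α} {mβ : MeasurableSpace β}

theorem exists_measurable_Icc_ae_eq_comp_of_ae_eq_condExp {μ : Measure α} {φ : α → β}
    {g : α → ℝ} (hg : g =ᵐ[μ] μ[g | mβ.comap φ]) (hg01 : ∀ x, g x ∈ Set.Icc (0 : ℝ) 1) :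
    ∃ V : β → ℝ, Measurable V ∧ (∀ y, V y ∈ Set.Icc (0 : ℝ) 1) ∧ g =ᵐ[μ] V ∘ φ := by
  have hcondExp_meas : Measurable[mβ.comap φ] μ[g | mβ.comap φ] :=
    stronglyMeasurable_condExp.measurable
  obtain ⟨V, hV, hcondExp⟩ := hcondExp_meas.exists_eq_measurable_comp
  refine ⟨fun y => max 0 (min 1 (V y)), measurable_const.max (measurable_const.min hV),
    fun y => ⟨le_max_left _ _, max_le zero_le_one (min_le_left _ _)⟩, ?_⟩
  filter_upwards [hg] with x hx
  have hVx : V (φ x) = g x := by rw [hx, hcondExp]; rfl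
  simp only [Function.comp_apply, hVx, min_eq_right (hg01 x).2, max_eq_right (hg01 x).1]

theorem MeasurePreserving.ae_of_ae_comp {μ : Measure α} {ν : Measure β} {φ : α → β}
    (hφ : MeasurePreserving φ μ ν) {p : β → Prop} (hp : MeasurableSet {y | p y})
    (h : ∀ᵐ x ∂μ, p (φ x)) : ∀ᵐ y ∂ν, p y := by
  rwa [← hφ.map_eq, ae_map_iff hφ.aemeasurable hp]

theorem ae_pairs_of_ae_prod {μ : Measure α} [SFinite μ] {p : α × α → Prop}
    (h : ∀ᵐ z ∂μ.prod μ, p z) :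
    ∀ᵐ t ∂μ.prod (μ.prod μ), p (t.1, t.2.1) ∧ p (t.2.1, t.2.2) ∧ p (t.1, t.2.2) := by
  filter_upwards
    [(QuasiMeasurePreserving.prodMap (.id μ) Measure.quasiMeasurePreserving_fst).ae h,
    Measure.quasiMeasurePreserving_snd.ae h,
    (QuasiMeasurePreserving.prodMap (.id μ) Measure.quasiMeasurePreserving_snd).ae h]
    with t h12 h23 h13
  exact ⟨h12, h23, h13⟩

end MeasureTheory

theorem stmt9_general {S S' : Type*} {F : MeasurableSpace S} {F' : MeasurableSpace S'}
    (μ : Measure S) [IsProbabilityMeasure μ] (μ' : Measure S') [IsProbabilityMeasure μ']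
    (r : S → S → Prop)
    (r' : S' → S' → Prop)
    (hrmeas' : MeasurableSet {p : S' × S' | r' p.1 p.2})
    -- `f` is an inclusion of ordered probability spaces
    (f : S → S') (hf : MeasurePreserving f μ μ')
    (hford : (μ.prod μ) {p : S × S | r p.1 p.2 ∧ ¬ r' (f p.1) (f p.2)} = 0)
    -- `W` is a poset kernel on `S`
    (W : S → S → ℝ)
    (hWrange : ∀ x y, W x y ∈ Set.Icc (0:ℝ) 1)
    (hax1 : ∀ x y, 0 < W x y → r x y)
    (hax2 : ∀ x y z, 0 < W x y → 0 < W y z → W x z = 1)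
    -- `W` agrees a.e. with its conditional expectation on `𝒜 ⊗ 𝒜`, `𝒜 = f⁻¹(F')`
    (hWcond : (fun p : S × S => W p.1 p.2) =ᵐ[μ.prod μ]
      (μ.prod μ)[(fun p : S × S => W p.1 p.2) |
        (MeasurableSpace.comap f F').prod (MeasurableSpace.comap f F')]) :
    ∃ U : S' → S' → ℝ,
      Measurable (fun p : S' × S' => U p.1 p.2) ∧
      (∀ x y, U x y ∈ Set.Icc (0:ℝ) 1) ∧
      (∀ᵐ p : S' × S' ∂(μ'.prod μ'), 0 < U p.1 p.2 → r' p.1 p.2) ∧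
      (∀ᵐ t : S' × S' × S' ∂(μ'.prod (μ'.prod μ')),
        0 < U t.1 t.2.1 → 0 < U t.2.1 t.2.2 → U t.1 t.2.2 = 1) ∧
      (fun p : S × S => W p.1 p.2) =ᵐ[μ.prod μ] (fun p : S × S => U (f p.1) (f p.2)) := by
  obtain ⟨V, hVmeas, hV01, hWV⟩ := exists_measurable_Icc_ae_eq_comp_of_ae_eq_condExp
    (φ := Prod.map f f) (by rwa [MeasurableSpace.comap_prodMap]) fun p => hWrange p.1 p.2
  have hWU : (fun p : S × S => W p.1 p.2) =ᵐ[μ.prod μ] fun p => V (f p.1, f p.2) := hWV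
  refine ⟨fun a b => V (a, b), hVmeas, fun a b => hV01 (a, b), ?_, ?_, hWU⟩
  · have hford_ae : ∀ᵐ p ∂μ.prod μ, r p.1 p.2 → r' (f p.1) (f p.2) :=
      ae_iff.2 (by simpa only [Classical.not_imp] using hford)
    have hr'meas : Measurable fun p : S' × S' => r' p.1 p.2 := measurableSet_setOfPred.1 hrmeas'
    refine (hf.prod hf).ae_of_ae_comp (measurableSet_setOfPred.2 (by fun_prop)) ?_
    filter_upwards [hWU, hford_ae] with p hWp hrp hVp
    exact hrp (hax1 p.1 p.2 (hWp ▸ hVp))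
  · refine (hf.prod (hf.prod hf)).ae_of_ae_comp (measurableSet_setOfPred.2 (by fun_prop)) ?_
    filter_upwards [ae_pairs_of_ae_prod hWU] with t ⟨h12, h23, h13⟩ hV12 hV23
    exact h13 ▸ hax2 _ _ _ (h12 ▸ hV12) (h23 ▸ hV23)

theorem stmt9 {S S' : Type*} {F : MeasurableSpace S} {F' : MeasurableSpace S'}
    (μ : Measure S) [IsProbabilityMeasure μ] (μ' : Measure S') [IsProbabilityMeasure μ']
    (r : S → S → Prop) (hirr : ∀ x, ¬ r x x)
    (htrans : ∀ x y z, r x y → r y z → r x z)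
    (hrmeas : MeasurableSet {p : S × S | r p.1 p.2})
    (r' : S' → S' → Prop) (hirr' : ∀ x, ¬ r' x x)
    (htrans' : ∀ x y z, r' x y → r' y z → r' x z)
    (hrmeas' : MeasurableSet {p : S' × S' | r' p.1 p.2})
    -- `f` is an inclusion of ordered probability spaces
    (f : S → S') (hf : MeasurePreserving f μ μ')
    (hford : (μ.prod μ) {p : S × S | r p.1 p.2 ∧ ¬ r' (f p.1) (f p.2)} = 0)
    -- `W` is a poset kernel on `S`
    (W : S → S → ℝ) (hWmeas : Measurable (fun p : S × S => W p.1 p.2))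
    (hWrange : ∀ x y, W x y ∈ Set.Icc (0:ℝ) 1)
    (hax1 : ∀ x y, 0 < W x y → r x y)
    (hax2 : ∀ x y z, 0 < W x y → 0 < W y z → W x z = 1)
    -- `W` agrees a.e. with its conditional expectation on `𝒜 ⊗ 𝒜`, `𝒜 = f⁻¹(F')`
    (hWcond : (fun p : S × S => W p.1 p.2) =ᵐ[μ.prod μ]
      (μ.prod μ)[(fun p : S × S => W p.1 p.2) |
        (MeasurableSpace.comap f F').prod (MeasurableSpace.comap f F')]) :
    ∃ U : S' → S' → ℝ,
      Measurable (fun p : S' × S' => U p.1 p.2) ∧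
      (∀ x y, U x y ∈ Set.Icc (0:ℝ) 1) ∧
      (∀ᵐ p : S' × S' ∂(μ'.prod μ'), 0 < U p.1 p.2 → r' p.1 p.2) ∧
      (∀ᵐ t : S' × S' × S' ∂(μ'.prod (μ'.prod μ')),
        0 < U t.1 t.2.1 → 0 < U t.2.1 t.2.2 → U t.1 t.2.2 = 1) ∧
      (fun p : S × S => W p.1 p.2) =ᵐ[μ.prod μ] (fun p : S × S => U (f p.1) (f p.2)) :=
  stmt9_general (F := F) μ μ' r r' hrmeas' f hf hford W hWrange hax1 hax2 hWcond
end

section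
/- Let (P, ≺) be a finite poset and A, B ⊆ P disjoint nonempty sets such that no element of B is below any element of A (i.e., there are no b ∈ B, a ∈ A with b ≺ a). If the pair (A,B) is not ε-regular (with respect to the density d(X,Y) = |{(x,y) ∈ X×Y : x ≺ y}|/(|X||Y|)), then there exist partitions A = Z₁ ∪ Z₂ and B = Z₃ ∪ Z₄ with no relations from Z₂ into Z₁ and none from Z₄ into Z₃, such that q((Z₁,Z₂),(Z₃,Z₄)) ≥ q(A,B) + ε⁴|A||B|/n², where n = |P|. -/
open scoped Classical

/-- Number of related pairs from `A` to `B`. -/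
noncomputable def eRel {α : Type*} [PartialOrder α] (A B : Finset α) : ℕ :=
  ((A ×ˢ B).filter fun p => p.1 < p.2).card

/-- Density of the pair `(A, B)` (zero if `A` or `B` is empty). -/
noncomputable def dens {α : Type*} [PartialOrder α] (A B : Finset α) : ℝ :=
  (eRel A B : ℝ) / ((A.card : ℝ) * (B.card : ℝ))

/-- The index `q(A,B) = (|A||B|/n²)·d(A,B)²` where `n = |α|`. -/
noncomputable def qIdx {α : Type*} [Fintype α] [PartialOrder α] (A B : Finset α) : ℝ :=
  ((A.card : ℝ) * (B.card : ℝ) / (Fintype.card α : ℝ) ^ 2) * dens A B ^ 2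

/-- The pair `(A,B)` is `ε`-regular. -/
def IsRegularPair {α : Type*} [PartialOrder α] (ε : ℝ) (A B : Finset α) : Prop :=
  ∀ X ⊆ A, ∀ Y ⊆ B, ε * (A.card : ℝ) ≤ (X.card : ℝ) → ε * (B.card : ℝ) ≤ (Y.card : ℝ) →
    |dens A B - dens X Y| < ε

section Helpers

/-- Extremal choice of a `k`-subset maximising `∑ f`, closed under the relation `r`. -/
lemma select_aux {α : Type*} [DecidableEq α] (A : Finset α) (r : α → α → Prop)
    (pos : α → ℕ) (hpos : ∀ a ∈ A, ∀ b ∈ A, r a b → pos a < pos b)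
    (f : α → ℕ) (hf : ∀ a ∈ A, ∀ b ∈ A, r a b → f b ≤ f a)
    (k : ℕ) (hk : k ≤ A.card) :
    ∃ U ⊆ A, U.card = k ∧ (∀ X ⊆ A, X.card = k → ∑ x ∈ X, f x ≤ ∑ u ∈ U, f u) ∧
      ∀ x ∈ A, ∀ u ∈ U, r x u → x ∈ U := by
  obtain ⟨T, hTA, hTk⟩ := Finset.exists_subset_card_eq hk
  have hTmem : T ∈ A.powersetCard k := Finset.mem_powersetCard.2 ⟨hTA, hTk⟩
  obtain ⟨M, hM, hMmax⟩ :=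
    Finset.exists_max_image (A.powersetCard k) (fun U => ∑ u ∈ U, f u) ⟨T, hTmem⟩
  set C := (A.powersetCard k).filter (fun U => ∑ u ∈ U, f u = ∑ u ∈ M, f u) with hC
  have hMC : M ∈ C := by simp [hC, hM]
  obtain ⟨U, hUC, hUmin⟩ :=
    Finset.exists_min_image C (fun U => ∑ u ∈ U, pos u) ⟨M, hMC⟩
  rw [hC, Finset.mem_filter, Finset.mem_powersetCard] at hUC
  obtain ⟨⟨hUA, hUk⟩, hUsum⟩ := hUC
  refine ⟨U, hUA, hUk, ?_, ?_⟩
  · intro X hXA hXk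
    rw [hUsum]
    exact hMmax X (Finset.mem_powersetCard.2 ⟨hXA, hXk⟩)
  · intro x hx u hu hr
    by_contra hxU
    have hfxu : f u ≤ f x := hf x hx u (hUA hu) hr
    have hpxu : pos x < pos u := hpos x hx u (hUA hu) hr
    set U' := insert x (U.erase u) with hU'
    have hxe : x ∉ U.erase u := fun h => hxU (Finset.mem_of_mem_erase h)
    have hU'A : U' ⊆ A := Finset.insert_subset hx ((Finset.erase_subset u U).trans hUA)
    have hU'k : U'.card = k := by
      rw [hU', Finset.card_insert_of_notMem hxe, Finset.card_erase_add_one hu]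
      exact hUk
    have hsf : ∑ v ∈ U', f v + f u = f x + ∑ v ∈ U, f v := by
      rw [hU', Finset.sum_insert hxe, add_assoc, Finset.sum_erase_add U f hu]
    have hsp : ∑ v ∈ U', pos v + pos u = pos x + ∑ v ∈ U, pos v := by
      rw [hU', Finset.sum_insert hxe, add_assoc, Finset.sum_erase_add U pos hu]
    have hU'mem : U' ∈ C := by
      rw [hC, Finset.mem_filter, Finset.mem_powersetCard]
      refine ⟨⟨hU'A, hU'k⟩, ?_⟩
      have hle : ∑ v ∈ U', f v ≤ ∑ u ∈ M, f u :=
        hMmax U' (Finset.mem_powersetCard.2 ⟨hU'A, hU'k⟩)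
      omega
    have := hUmin U' hU'mem
    omega

lemma eRel_sum_left {α : Type*} [PartialOrder α] (X Y : Finset α) :
    eRel X Y = ∑ x ∈ X, (Y.filter fun y => x < y).card := by
  rw [eRel, Finset.card_filter, Finset.sum_product]
  exact Finset.sum_congr rfl fun x _ => (Finset.card_filter _ _).symm

lemma eRel_sum_right {α : Type*} [PartialOrder α] (X Y : Finset α) :
    eRel X Y = ∑ y ∈ Y, (X.filter fun x => x < y).card := by
  rw [eRel, Finset.card_filter, Finset.sum_product, Finset.sum_comm]
  exact Finset.sum_congr rfl fun y _ => (Finset.card_filter _ _).symm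

lemma eRel_union_left {α : Type*} [PartialOrder α] {X X' : Finset α} (Y : Finset α)
    (h : Disjoint X X') : eRel (X ∪ X') Y = eRel X Y + eRel X' Y := by
  rw [eRel_sum_left, eRel_sum_left, eRel_sum_left, Finset.sum_union h]

lemma eRel_union_right {α : Type*} [PartialOrder α] (X : Finset α) {Y Y' : Finset α}
    (h : Disjoint Y Y') : eRel X (Y ∪ Y') = eRel X Y + eRel X Y' := by
  rw [eRel_sum_right, eRel_sum_right, eRel_sum_right, Finset.sum_union h]

lemma dens_card {α : Type*} [PartialOrder α] (X Y : Finset α) :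
    ((X.card : ℝ) * Y.card) * dens X Y = eRel X Y := by
  rcases eq_or_ne ((X.card : ℝ) * Y.card) 0 with h | h
  · have he : eRel X Y = 0 := by
      rcases mul_eq_zero.1 h with h' | h'
      · have : X = ∅ := Finset.card_eq_zero.1 (by exact_mod_cast h')
        simp [eRel, this]
      · have : Y = ∅ := Finset.card_eq_zero.1 (by exact_mod_cast h')
        simp [eRel, this]
    rw [h, he]; simp
  · rw [dens, mul_comm, div_mul_cancel₀ _ h]

/-- The defect form of the Cauchy–Schwarz inequality for the index `q`. -/
lemma energy_boost {α : Type*} [Fintype α] [PartialOrder α] {ε : ℝ} (hε : 0 < ε)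
    {A B Z₁ Z₂ Z₃ Z₄ : Finset α}
    (h12 : Z₁ ∪ Z₂ = A) (hd12 : Disjoint Z₁ Z₂)
    (h34 : Z₃ ∪ Z₄ = B) (hd34 : Disjoint Z₃ Z₄)
    (hP : ε * A.card ≤ Z₁.card) (hQ : ε * B.card ≤ Z₃.card)
    (hdev : ε ≤ |dens Z₁ Z₃ - dens A B|) :
    qIdx A B + ε ^ 4 * ((A.card : ℝ) * B.card) / (Fintype.card α : ℝ) ^ 2 ≤
      qIdx Z₁ Z₃ + qIdx Z₁ Z₄ + qIdx Z₂ Z₃ + qIdx Z₂ Z₄ := by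
  have G13 := dens_card Z₁ Z₃
  have G14 := dens_card Z₁ Z₄
  have G23 := dens_card Z₂ Z₃
  have G24 := dens_card Z₂ Z₄
  have GAB := dens_card A B
  have hE : (eRel A B : ℝ) = eRel Z₁ Z₃ + eRel Z₁ Z₄ + eRel Z₂ Z₃ + eRel Z₂ Z₄ := by
    have h : eRel A B = eRel Z₁ Z₃ + eRel Z₁ Z₄ + (eRel Z₂ Z₃ + eRel Z₂ Z₄) := by
      rw [← h12, ← h34, eRel_union_left _ hd12, eRel_union_right Z₁ hd34,
        eRel_union_right Z₂ hd34]
    push_cast [h]; ring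
  have hcardA : (A.card : ℝ) = Z₁.card + Z₂.card := by
    rw [← h12, Finset.card_union_of_disjoint hd12]; push_cast; ring
  have hcardB : (B.card : ℝ) = Z₃.card + Z₄.card := by
    rw [← h34, Finset.card_union_of_disjoint hd34]; push_cast; ring
  have hdev2 : ε ^ 2 ≤ (dens Z₁ Z₃ - dens A B) ^ 2 := by
    have h := pow_le_pow_left₀ hε.le hdev 2
    rwa [sq_abs] at h
  have expand :
      (Z₁.card : ℝ) * Z₃.card * (dens Z₁ Z₃ - dens A B) ^ 2
      + Z₁.card * Z₄.card * (dens Z₁ Z₄ - dens A B) ^ 2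
      + Z₂.card * Z₃.card * (dens Z₂ Z₃ - dens A B) ^ 2
      + Z₂.card * Z₄.card * (dens Z₂ Z₄ - dens A B) ^ 2
      = ((Z₁.card : ℝ) * Z₃.card * dens Z₁ Z₃ ^ 2 + Z₁.card * Z₄.card * dens Z₁ Z₄ ^ 2
        + Z₂.card * Z₃.card * dens Z₂ Z₃ ^ 2 + Z₂.card * Z₄.card * dens Z₂ Z₄ ^ 2)
        - (A.card : ℝ) * B.card * dens A B ^ 2 := by
    linear_combination (-2 * dens A B) * G13 + (-2 * dens A B) * G14
      + (-2 * dens A B) * G23 + (-2 * dens A B) * G24 + (2 * dens A B) * GAB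
      + (2 * dens A B) * hE
      + (-(dens A B ^ 2) * (B.card : ℝ)) * hcardA
      + (-(dens A B ^ 2) * ((Z₁.card : ℝ) + Z₂.card)) * hcardB
  have t14 : (0:ℝ) ≤ (Z₁.card : ℝ) * Z₄.card * (dens Z₁ Z₄ - dens A B) ^ 2 := by positivity
  have t23 : (0:ℝ) ≤ (Z₂.card : ℝ) * Z₃.card * (dens Z₂ Z₃ - dens A B) ^ 2 := by positivity
  have t24 : (0:ℝ) ≤ (Z₂.card : ℝ) * Z₄.card * (dens Z₂ Z₄ - dens A B) ^ 2 := by positivity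
  have t13 : ε ^ 4 * ((A.card : ℝ) * B.card) ≤
      (Z₁.card : ℝ) * Z₃.card * (dens Z₁ Z₃ - dens A B) ^ 2 := by
    have h1 : (0:ℝ) ≤ ε * A.card := by positivity
    have h2 : (0:ℝ) ≤ ε * B.card := by positivity
    have hz1 : (0:ℝ) ≤ (Z₁.card : ℝ) := Nat.cast_nonneg _
    calc ε ^ 4 * ((A.card : ℝ) * B.card) = (ε * A.card) * (ε * B.card) * ε ^ 2 := by ring
      _ ≤ ((Z₁.card : ℝ) * Z₃.card) * (dens Z₁ Z₃ - dens A B) ^ 2 := by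
          apply mul_le_mul (mul_le_mul hP hQ h2 hz1) hdev2 (by positivity) (by positivity)
      _ = (Z₁.card : ℝ) * Z₃.card * (dens Z₁ Z₃ - dens A B) ^ 2 := by ring
  have key : (A.card : ℝ) * B.card * dens A B ^ 2 + ε ^ 4 * ((A.card : ℝ) * B.card) ≤
      (Z₁.card : ℝ) * Z₃.card * dens Z₁ Z₃ ^ 2 + Z₁.card * Z₄.card * dens Z₁ Z₄ ^ 2
      + Z₂.card * Z₃.card * dens Z₂ Z₃ ^ 2 + Z₂.card * Z₄.card * dens Z₂ Z₄ ^ 2 := by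
    linarith [expand, t13, t14, t23, t24]
  have hN2 : (0 : ℝ) ≤ (Fintype.card α : ℝ) ^ 2 := by positivity
  have lhs_eq : qIdx A B + ε ^ 4 * ((A.card : ℝ) * B.card) / (Fintype.card α : ℝ) ^ 2
      = ((A.card : ℝ) * B.card * dens A B ^ 2 + ε ^ 4 * ((A.card : ℝ) * B.card))
        / (Fintype.card α : ℝ) ^ 2 := by
    rw [qIdx]; ring
  have rhs_eq : qIdx Z₁ Z₃ + qIdx Z₁ Z₄ + qIdx Z₂ Z₃ + qIdx Z₂ Z₄
      = ((Z₁.card : ℝ) * Z₃.card * dens Z₁ Z₃ ^ 2 + Z₁.card * Z₄.card * dens Z₁ Z₄ ^ 2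
        + Z₂.card * Z₃.card * dens Z₂ Z₃ ^ 2 + Z₂.card * Z₄.card * dens Z₂ Z₄ ^ 2)
        / (Fintype.card α : ℝ) ^ 2 := by
    simp only [qIdx]; ring
  rw [lhs_eq, rhs_eq]
  exact div_le_div_of_nonneg_right key hN2

lemma degY_antitone {α : Type*} [PartialOrder α] (Y : Finset α) {a b : α} (h : a < b) :
    (Y.filter fun y => b < y).card ≤ (Y.filter fun y => a < y).card :=
  Finset.card_le_card fun y hy => by
    simp only [Finset.mem_filter] at *; exact ⟨hy.1, h.trans hy.2⟩

lemma degX_monotone {α : Type*} [PartialOrder α] (X : Finset α) {a b : α} (h : a < b) :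
    (X.filter fun x => x < a).card ≤ (X.filter fun x => x < b).card :=
  Finset.card_le_card fun x hx => by
    simp only [Finset.mem_filter] at *; exact ⟨hx.1, hx.2.trans h⟩

lemma posLt {α : Type*} [Fintype α] [PartialOrder α] {a b : α} (h : a < b) :
    (Finset.univ.filter fun z => z < a).card < (Finset.univ.filter fun z => z < b).card := by
  apply Finset.card_lt_card
  have hsub : (Finset.univ.filter fun z => z < a) ⊆ (Finset.univ.filter fun z => z < b) :=
    fun z hz => by simp only [Finset.mem_filter, Finset.mem_univ, true_and] at *
                   exact hz.trans h
  exact (Finset.ssubset_iff_of_subset hsub).2 ⟨a, by simp [h], by simp⟩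

lemma posGt {α : Type*} [Fintype α] [PartialOrder α] {a b : α} (h : b < a) :
    (Finset.univ.filter fun z => a < z).card < (Finset.univ.filter fun z => b < z).card := by
  apply Finset.card_lt_card
  have hsub : (Finset.univ.filter fun z => a < z) ⊆ (Finset.univ.filter fun z => b < z) :=
    fun z hz => by simp only [Finset.mem_filter, Finset.mem_univ, true_and] at *
                   exact h.trans hz
  exact (Finset.ssubset_iff_of_subset hsub).2 ⟨a, by simp [h], by simp⟩

lemma stage_max_A {α : Type*} [Fintype α] [PartialOrder α] (A Y X : Finset α) (hXA : X ⊆ A) :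
    ∃ U ⊆ A, U.card = X.card ∧ eRel X Y ≤ eRel U Y ∧
      ∀ x ∈ A, ∀ u ∈ U, x < u → x ∈ U := by
  obtain ⟨U, hUA, hUc, hUmax, hUcl⟩ :=
    select_aux A (· < ·) (fun x => (Finset.univ.filter fun z => z < x).card)
      (fun a _ b _ h => posLt h)
      (fun x => (Y.filter fun y => x < y).card)
      (fun a _ b _ h => degY_antitone Y h)
      X.card (Finset.card_le_card hXA)
  exact ⟨U, hUA, hUc, by rw [eRel_sum_left, eRel_sum_left]; exact hUmax X hXA rfl, hUcl⟩

lemma stage_max_B {α : Type*} [Fintype α] [PartialOrder α] (B U Y : Finset α) (hYB : Y ⊆ B) :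
    ∃ V ⊆ B, V.card = Y.card ∧ eRel U Y ≤ eRel U V ∧
      ∀ y ∈ B, ∀ v ∈ V, v < y → y ∈ V := by
  obtain ⟨V, hVB, hVc, hVmax, hVcl⟩ :=
    select_aux B (fun x u => u < x) (fun x => (Finset.univ.filter fun z => x < z).card)
      (fun a _ b _ h => posGt h)
      (fun y => (U.filter fun x => x < y).card)
      (fun a _ b _ h => degX_monotone U h)
      Y.card (Finset.card_le_card hYB)
  exact ⟨V, hVB, hVc, by rw [eRel_sum_right, eRel_sum_right]; exact hVmax Y hYB rfl, hVcl⟩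

lemma stage_min_A {α : Type*} [Fintype α] [PartialOrder α] (A Y X : Finset α) (hXA : X ⊆ A) :
    ∃ U ⊆ A, U.card = X.card ∧ eRel U Y ≤ eRel X Y ∧
      ∀ x ∈ A, ∀ u ∈ U, u < x → x ∈ U := by
  obtain ⟨U, hUA, hUc, hUmax, hUcl⟩ :=
    select_aux A (fun x u => u < x) (fun x => (Finset.univ.filter fun z => x < z).card)
      (fun a _ b _ h => posGt h)
      (fun x => Y.card - (Y.filter fun y => x < y).card)
      (fun a _ b _ h => Nat.sub_le_sub_left (degY_antitone Y h) Y.card)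
      X.card (Finset.card_le_card hXA)
  refine ⟨U, hUA, hUc, ?_, hUcl⟩
  have hsum := hUmax X hXA rfl
  have hUe : ∑ x ∈ U, ((Y.filter fun y => x < y).card
      + (Y.card - (Y.filter fun y => x < y).card)) = ∑ x ∈ U, Y.card :=
    Finset.sum_congr rfl fun x _ => by
      have := Finset.card_filter_le Y (fun y => x < y); omega
  have hXe : ∑ x ∈ X, ((Y.filter fun y => x < y).card
      + (Y.card - (Y.filter fun y => x < y).card)) = ∑ x ∈ X, Y.card :=
    Finset.sum_congr rfl fun x _ => by
      have := Finset.card_filter_le Y (fun y => x < y); omega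
  rw [Finset.sum_add_distrib, Finset.sum_const] at hUe hXe
  rw [hUc] at hUe
  have heq := hUe.trans hXe.symm
  rw [eRel_sum_left, eRel_sum_left]
  omega

lemma stage_min_B {α : Type*} [Fintype α] [PartialOrder α] (B U Y : Finset α) (hYB : Y ⊆ B) :
    ∃ V ⊆ B, V.card = Y.card ∧ eRel U V ≤ eRel U Y ∧
      ∀ x ∈ B, ∀ v ∈ V, x < v → x ∈ V := by
  obtain ⟨V, hVB, hVc, hVmax, hVcl⟩ :=
    select_aux B (· < ·) (fun x => (Finset.univ.filter fun z => z < x).card)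
      (fun a _ b _ h => posLt h)
      (fun y => U.card - (U.filter fun x => x < y).card)
      (fun a _ b _ h => Nat.sub_le_sub_left (degX_monotone U h) U.card)
      Y.card (Finset.card_le_card hYB)
  refine ⟨V, hVB, hVc, ?_, hVcl⟩
  have hsum := hVmax Y hYB rfl
  have hVe : ∑ y ∈ V, ((U.filter fun x => x < y).card
      + (U.card - (U.filter fun x => x < y).card)) = ∑ y ∈ V, U.card :=
    Finset.sum_congr rfl fun y _ => by
      have := Finset.card_filter_le U (fun x => x < y); omega
  have hYe : ∑ y ∈ Y, ((U.filter fun x => x < y).card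
      + (U.card - (U.filter fun x => x < y).card)) = ∑ y ∈ Y, U.card :=
    Finset.sum_congr rfl fun y _ => by
      have := Finset.card_filter_le U (fun x => x < y); omega
  rw [Finset.sum_add_distrib, Finset.sum_const] at hVe hYe
  rw [hVc] at hVe
  have heq := hVe.trans hYe.symm
  rw [eRel_sum_right, eRel_sum_right]
  omega

end Helpers

theorem stmt11 {α : Type*} [Fintype α] [PartialOrder α] (ε : ℝ) (hε : 0 < ε)
    (A B : Finset α) (hA : A.Nonempty) (hB : B.Nonempty) (hdisj : Disjoint A B)
    (hBA : ∀ b ∈ B, ∀ a ∈ A, ¬ b < a)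
    (hirr : ¬ IsRegularPair ε A B) :
    ∃ Z₁ Z₂ Z₃ Z₄ : Finset α,
      Z₁ ∪ Z₂ = A ∧ Disjoint Z₁ Z₂ ∧ Z₃ ∪ Z₄ = B ∧ Disjoint Z₃ Z₄ ∧
      (∀ x ∈ Z₂, ∀ y ∈ Z₁, ¬ x < y) ∧ (∀ x ∈ Z₄, ∀ y ∈ Z₃, ¬ x < y) ∧
      qIdx A B + ε ^ 4 * ((A.card : ℝ) * (B.card : ℝ)) / (Fintype.card α : ℝ) ^ 2 ≤
        qIdx Z₁ Z₃ + qIdx Z₁ Z₄ + qIdx Z₂ Z₃ + qIdx Z₂ Z₄ := by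
  rw [IsRegularPair] at hirr
  push_neg at hirr
  obtain ⟨X, hXA, Y, hYB, hX, hY, hdev⟩ := hirr
  have hA0 : (0:ℝ) < A.card := by exact_mod_cast Finset.card_pos.2 hA
  have hB0 : (0:ℝ) < B.card := by exact_mod_cast Finset.card_pos.2 hB
  have hX0 : (0:ℝ) < X.card := lt_of_lt_of_le (by positivity) hX
  have hY0 : (0:ℝ) < Y.card := lt_of_lt_of_le (by positivity) hY
  rcases le_abs.1 hdev with hcase | hcase
  · -- dens X Y ≤ dens A B - ε : minimise
    obtain ⟨U, hUA, hUc, hUe, hUcl⟩ := stage_min_A A Y X hXA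
    obtain ⟨V, hVB, hVc, hVe, hVcl⟩ := stage_min_B B U Y hYB
    have hUcR : (U.card : ℝ) = X.card := by exact_mod_cast hUc
    have hVcR : (V.card : ℝ) = Y.card := by exact_mod_cast hVc
    have hdens1 : dens U Y ≤ dens X Y := by
      rw [dens, dens, hUcR]
      exact div_le_div_of_nonneg_right (by exact_mod_cast hUe) (by positivity)
    have hdens2 : dens U V ≤ dens U Y := by
      rw [dens, dens, hVcR]
      exact div_le_div_of_nonneg_right (by exact_mod_cast hVe) (by positivity)
    have hdevUV : ε ≤ |dens U V - dens A B| := le_abs.2 (Or.inr (by linarith))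
    have hEn := energy_boost hε (Finset.union_sdiff_of_subset hUA) Finset.disjoint_sdiff
      (Finset.union_sdiff_of_subset hVB) Finset.disjoint_sdiff
      (by rw [hUcR]; exact hX) (by rw [hVcR]; exact hY) hdevUV
    refine ⟨A \ U, U, V, B \ V, Finset.sdiff_union_of_subset hUA, Finset.sdiff_disjoint,
      Finset.union_sdiff_of_subset hVB, Finset.disjoint_sdiff, ?_, ?_, by linarith⟩
    · intro x hx y hy hlt
      exact (Finset.mem_sdiff.1 hy).2 (hUcl y (Finset.mem_sdiff.1 hy).1 x hx hlt)
    · intro x hx y hy hlt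
      exact (Finset.mem_sdiff.1 hx).2 (hVcl x (Finset.mem_sdiff.1 hx).1 y hy hlt)
  · -- dens A B + ε ≤ dens X Y : maximise
    obtain ⟨U, hUA, hUc, hUe, hUcl⟩ := stage_max_A A Y X hXA
    obtain ⟨V, hVB, hVc, hVe, hVcl⟩ := stage_max_B B U Y hYB
    have hUcR : (U.card : ℝ) = X.card := by exact_mod_cast hUc
    have hVcR : (V.card : ℝ) = Y.card := by exact_mod_cast hVc
    have hdens1 : dens X Y ≤ dens U Y := by
      rw [dens, dens, hUcR]
      exact div_le_div_of_nonneg_right (by exact_mod_cast hUe) (by positivity)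
    have hdens2 : dens U Y ≤ dens U V := by
      rw [dens, dens, hVcR]
      exact div_le_div_of_nonneg_right (by exact_mod_cast hVe) (by positivity)
    have hdevUV : ε ≤ |dens U V - dens A B| := le_abs.2 (Or.inl (by linarith))
    have hEn := energy_boost hε (Finset.union_sdiff_of_subset hUA) Finset.disjoint_sdiff
      (Finset.union_sdiff_of_subset hVB) Finset.disjoint_sdiff
      (by rw [hUcR]; exact hX) (by rw [hVcR]; exact hY) hdevUV
    refine ⟨U, A \ U, B \ V, V, Finset.union_sdiff_of_subset hUA, Finset.disjoint_sdiff,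
      Finset.sdiff_union_of_subset hVB, Finset.sdiff_disjoint, ?_, ?_, by linarith⟩
    · intro x hx y hy hlt
      exact (Finset.mem_sdiff.1 hx).2 (hUcl x (Finset.mem_sdiff.1 hx).1 y hy hlt)
    · intro x hx y hy hlt
      exact (Finset.mem_sdiff.1 hy).2 (hVcl y (Finset.mem_sdiff.1 hy).1 x hx hlt)
end

section
/- Counting cross-relations from a regular partition: let (P,≺) be a finite poset with an ε-regular poset partition R = (V₁,…,V_k). Then for any two subsets S, T ⊆ P, |e(S,T) − e'(S,T)| ≤ 3ε·C(|P|,2), where e(S,T) = |{(x,y) ∈ S×T : x ≺ y}| and e'(S,T) = Σ_{i<j} d(V_i,V_j)·|V_i ∩ S|·|V_j ∩ T|. -/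
/-!
Split `e(S, T)` along the blocks `(V i ∩ S) × (V j ∩ T)`. Blocks with `j < i` contribute nothing,
since relations only go forward. A diagonal block lies inside `V i`, so it contributes at most
`C(|V i|, 2)`, and parts of size at most `max(εn, 1)` give `∑ C(|V i|, 2) ≤ ε C(n, 2)`. A block
with `i < j` differs from its density prediction by at most `ε |V i| |V j|` when the pair is
regular (by regularity if both pieces are large, trivially otherwise) and by at most
`|V i| |V j|` when it is not. As `∑_{i<j} |V i| |V j| ≤ C(n, 2)`, the off-diagonal error is at
most `2ε C(n, 2)`.
-/

open scoped Classical

/-- A poset partition: pairwise disjoint parts covering everything, with all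
cross-relations going forward. -/
def IsPosetPartition {α : Type*} [Fintype α] [PartialOrder α] {k : ℕ}
    (V : Fin k → Finset α) : Prop :=
  (∀ i j, i ≠ j → Disjoint (V i) (V j)) ∧
  (Finset.univ.biUnion V = (Finset.univ : Finset α)) ∧
  (∀ i j : Fin k, j < i → ∀ x ∈ V i, ∀ y ∈ V j, ¬ x < y)

/-- An `ε`-regular partition. -/
def IsRegularPartition {α : Type*} [Fintype α] [PartialOrder α] (ε : ℝ)
    {k : ℕ} (V : Fin k → Finset α) : Prop :=
  (∀ i, ((V i).card : ℝ) ≤ max (ε * (Fintype.card α : ℝ)) 1) ∧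
  (∑ p ∈ Finset.univ.filter
      (fun p : Fin k × Fin k => p.1 < p.2 ∧ ¬ IsRegularPair ε (V p.1) (V p.2)),
      ((V p.1).card : ℝ) * ((V p.2).card : ℝ)) ≤
    ε * (((Fintype.card α).choose 2 : ℕ) : ℝ)

section Sums

variable {ι : Type*} [Fintype ι] [LinearOrder ι]

theorem sum_prod_eq_sum_lt_add_sum_diag_add_sum_lt_swap {M : Type*} [AddCommMonoid M]
    (f : ι × ι → M) :
    ∑ p, f p = ∑ p ∈ Finset.univ.filter (fun p : ι × ι => p.1 < p.2), f p + ∑ i, f (i, i) +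
      ∑ p ∈ Finset.univ.filter (fun p : ι × ι => p.1 < p.2), f p.swap := by
  have hsplit : ∀ p : ι × ι, f p = ((if p.1 < p.2 then f p else 0) +
      (if p.1 = p.2 then f p else 0)) + if p.2 < p.1 then f p else 0 := by
    intro p
    rcases lt_trichotomy p.1 p.2 with h | h | h
    · simp [h, h.ne, h.not_gt]
    · simp [h]
    · simp [h, h.ne', h.not_gt]
  have hdiag : ∑ p : ι × ι, (if p.1 = p.2 then f p else 0) = ∑ i, f (i, i) := by
    rw [Fintype.sum_prod_type]
    exact Finset.sum_congr rfl fun i _ => by simp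
  have hswap : ∑ p ∈ Finset.univ.filter (fun p : ι × ι => p.2 < p.1), f p =
      ∑ p ∈ Finset.univ.filter (fun p : ι × ι => p.1 < p.2), f p.swap :=
    Finset.sum_equiv (Equiv.prodComm ι ι) (by simp) (by simp)
  rw [Finset.sum_congr rfl fun p _ => hsplit p, Finset.sum_add_distrib, Finset.sum_add_distrib,
    hdiag, ← Finset.sum_filter, ← Finset.sum_filter, hswap]

theorem sum_lt_mul_le_choose_two (a : ι → ℕ) :
    ∑ p ∈ Finset.univ.filter (fun p : ι × ι => p.1 < p.2), ((a p.1 : ℝ) * a p.2) ≤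
      (((∑ i, a i).choose 2 : ℕ) : ℝ) := by
  have hsq : ((∑ i, a i : ℕ) : ℝ) ^ 2 =
      2 * ∑ p ∈ Finset.univ.filter (fun p : ι × ι => p.1 < p.2), ((a p.1 : ℝ) * a p.2) +
        ∑ i, (a i : ℝ) ^ 2 := by
    rw [sq, Nat.cast_sum, Finset.sum_mul_sum, ← Finset.sum_product',
      Finset.univ_product_univ, sum_prod_eq_sum_lt_add_sum_diag_add_sum_lt_swap]
    have hcomm (p : ι × ι) : (a p.swap.1 : ℝ) * a p.swap.2 = a p.1 * a p.2 := mul_comm _ _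
    simp only [hcomm, sq]
    ring
  have hle_sq : ((∑ i, a i : ℕ) : ℝ) ≤ ∑ i, (a i : ℝ) ^ 2 := by
    rw [Nat.cast_sum]
    exact Finset.sum_le_sum fun i _ => by
      exact_mod_cast Nat.le_self_pow two_ne_zero (a i)
  rw [Nat.cast_choose_two]
  nlinarith

end Sums

-- With truncated subtraction the bound also holds for `a = 0`.
theorem choose_two_le_mul_pred {m : ℝ} {a : ℕ} (ha : (a : ℝ) ≤ max m 1) :
    ((a.choose 2 : ℕ) : ℝ) ≤ m * ((a - 1 : ℕ) : ℝ) / 2 := by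
  match a, ha with
  | 0, _ => simp
  | 1, _ => simp
  | a + 2, ha =>
    have ham : (a : ℝ) + 2 ≤ m := by
      push_cast at ha
      rcases le_max_iff.mp ha with h | h
      · exact h
      · linarith
    rw [Nat.cast_choose_two]
    push_cast
    nlinarith

theorem Finset.sum_tsub_one_le {ι : Type*} (s : Finset ι) (a : ι → ℕ) :
    ∑ i ∈ s, (a i - 1) ≤ (∑ i ∈ s, a i) - 1 := by
  induction s using Finset.induction_on with
  | empty => simp
  | insert j s hj ih =>
    rw [Finset.sum_insert hj, Finset.sum_insert hj]
    omega

theorem sum_choose_two_le_mul_choose_two {ι : Type*} (s : Finset ι) (a : ι → ℕ) {ε : ℝ}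
    (hε : 0 ≤ ε) (ha : ∀ i ∈ s, (a i : ℝ) ≤ max (ε * ((∑ i ∈ s, a i : ℕ) : ℝ)) 1) :
    ∑ i ∈ s, ((a i).choose 2 : ℝ) ≤ ε * (((∑ i ∈ s, a i).choose 2 : ℕ) : ℝ) := by
  set n := ∑ i ∈ s, a i
  have hpred : (∑ i ∈ s, ((a i - 1 : ℕ) : ℝ)) ≤ ((n - 1 : ℕ) : ℝ) := by
    exact_mod_cast Finset.sum_tsub_one_le s a
  have hn : ((n.choose 2 : ℕ) : ℝ) = n * ((n - 1 : ℕ) : ℝ) / 2 := by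
    rcases n with _ | n <;> simp [Nat.cast_choose_two]
  calc ∑ i ∈ s, ((a i).choose 2 : ℝ)
      ≤ ∑ i ∈ s, ε * n * ((a i - 1 : ℕ) : ℝ) / 2 :=
        Finset.sum_le_sum fun i hi => choose_two_le_mul_pred (ha i hi)
    _ = ε * n * (∑ i ∈ s, ((a i - 1 : ℕ) : ℝ)) / 2 := by
        rw [← Finset.sum_div, ← Finset.mul_sum]
    _ ≤ ε * n * ((n - 1 : ℕ) : ℝ) / 2 := by gcongr
    _ = ε * ((n.choose 2 : ℕ) : ℝ) := by rw [hn]; ring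

section eRel

variable {α : Type*} [PartialOrder α]

theorem eRel_eq_sum (A B : Finset α) :
    eRel A B = ∑ x ∈ A, ∑ y ∈ B, if x < y then 1 else 0 := by
  rw [eRel, Finset.card_filter, Finset.sum_product]

theorem eRel_biUnion {ι κ : Type*} {s : Finset ι} {t : Finset κ} {A : ι → Finset α}
    {B : κ → Finset α} (hA : (s : Set ι).PairwiseDisjoint A)
    (hB : (t : Set κ).PairwiseDisjoint B) :
    eRel (s.biUnion A) (t.biUnion B) = ∑ i ∈ s, ∑ j ∈ t, eRel (A i) (B j) := by
  simp only [eRel_eq_sum, Finset.sum_biUnion hA, Finset.sum_biUnion hB]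
  exact Finset.sum_congr rfl fun i _ => Finset.sum_comm

theorem eRel_eq_zero {A B : Finset α} (h : ∀ x ∈ A, ∀ y ∈ B, ¬ x < y) : eRel A B = 0 := by
  rw [eRel, Finset.card_eq_zero, Finset.filter_eq_empty_iff]
  rintro ⟨x, y⟩ hxy
  rw [Finset.mem_product] at hxy
  exact h x hxy.1 y hxy.2

theorem eRel_le_card_mul_card (A B : Finset α) : eRel A B ≤ A.card * B.card :=
  (Finset.card_filter_le _ _).trans_eq (Finset.card_product A B)

theorem eRel_le_choose_two {W X Y : Finset α} (hX : X ⊆ W) (hY : Y ⊆ W) :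
    eRel X Y ≤ W.card.choose 2 := by
  rw [← Sym2.card_image_offDiag W]
  refine Finset.card_le_card_of_injOn Sym2.mk.uncurry ?_ ?_
  · rintro ⟨x, y⟩ hxy
    simp only [Finset.coe_filter, Finset.mem_product, Set.mem_ofPred_eq] at hxy
    exact Finset.mem_image_of_mem _ (Finset.mem_offDiag.mpr ⟨hX hxy.1.1, hY hxy.1.2, hxy.2.ne⟩)
  · rintro ⟨x, y⟩ hxy ⟨x', y'⟩ hxy' h
    simp only [Finset.coe_filter, Finset.mem_product, Set.mem_ofPred_eq] at hxy hxy'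
    rcases Sym2.eq_iff.mp h with ⟨rfl, rfl⟩ | ⟨rfl, rfl⟩
    · rfl
    · exact absurd (hxy.2.trans hxy'.2) (lt_irrefl x)

theorem dens_nonneg (A B : Finset α) : 0 ≤ dens A B := by
  unfold dens
  positivity

theorem dens_le_one (A B : Finset α) : dens A B ≤ 1 := by
  unfold dens
  refine div_le_one_of_le₀ ?_ (by positivity)
  exact_mod_cast eRel_le_card_mul_card A B

theorem dens_mul_card_mul_card (A B : Finset α) :
    dens A B * A.card * B.card = eRel A B := by
  rcases eq_or_ne ((A.card : ℝ) * B.card) 0 with h | h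
  · have he : (eRel A B : ℝ) ≤ 0 := h ▸ (by exact_mod_cast eRel_le_card_mul_card A B)
    rw [mul_assoc, h, mul_zero]
    exact (le_antisymm he (Nat.cast_nonneg _)).symm
  · rw [dens, mul_assoc, div_mul_cancel₀ _ h]

theorem abs_eRel_sub_dens_mul_le (A B X Y : Finset α) :
    |(eRel X Y : ℝ) - dens A B * X.card * Y.card| ≤ X.card * Y.card := by
  have he : (eRel X Y : ℝ) ≤ X.card * Y.card := by exact_mod_cast eRel_le_card_mul_card X Y
  have hd : dens A B * X.card * Y.card ≤ X.card * Y.card := by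
    rw [mul_assoc]
    exact mul_le_of_le_one_left (by positivity) (dens_le_one A B)
  have hd0 : 0 ≤ dens A B * X.card * Y.card :=
    mul_nonneg (mul_nonneg (dens_nonneg A B) (Nat.cast_nonneg _)) (Nat.cast_nonneg _)
  rw [abs_sub_le_iff]
  constructor <;> linarith [(Nat.cast_nonneg (eRel X Y) : (0 : ℝ) ≤ _)]

theorem IsRegularPair.abs_eRel_sub_dens_mul_le {ε : ℝ} {A B X Y : Finset α}
    (h : IsRegularPair ε A B) (hX : X ⊆ A) (hY : Y ⊆ B) :
    |(eRel X Y : ℝ) - dens A B * X.card * Y.card| ≤ ε * (A.card * B.card) := by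
  have hXA : (X.card : ℝ) ≤ A.card := by exact_mod_cast Finset.card_le_card hX
  have hYB : (Y.card : ℝ) ≤ B.card := by exact_mod_cast Finset.card_le_card hY
  by_cases hsmall : (X.card : ℝ) < ε * A.card ∨ (Y.card : ℝ) < ε * B.card
  · refine (_root_.abs_eRel_sub_dens_mul_le A B X Y).trans ?_
    rcases hsmall with hs | hs
    · calc (X.card : ℝ) * Y.card ≤ ε * A.card * B.card := by
            gcongr
            exact (Nat.cast_nonneg _).trans hs.le
        _ = _ := mul_assoc _ _ _
    · calc (X.card : ℝ) * Y.card ≤ A.card * (ε * B.card) := by gcongr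
        _ = _ := by ring
  rw [not_or, not_lt, not_lt] at hsmall
  have hdens := h X hX Y hY hsmall.1 hsmall.2
  rw [← dens_mul_card_mul_card X Y, mul_assoc, mul_assoc, ← sub_mul, abs_mul, abs_sub_comm,
    abs_of_nonneg (by positivity : (0 : ℝ) ≤ X.card * Y.card)]
  exact mul_le_mul hdens.le (by gcongr) (by positivity) ((abs_nonneg _).trans hdens.le)

end eRel

namespace IsPosetPartition

variable {α : Type*} [Fintype α] [PartialOrder α] {k : ℕ} {V : Fin k → Finset α}

theorem sum_card (hpp : IsPosetPartition V) : ∑ i, (V i).card = Fintype.card α := by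
  rw [← Finset.card_biUnion fun i _ j _ hij => hpp.1 i j hij, hpp.2.1, Finset.card_univ]

theorem biUnion_inter (hpp : IsPosetPartition V) (S : Finset α) :
    Finset.univ.biUnion (fun i => V i ∩ S) = S := by
  rw [← Finset.biUnion_inter, hpp.2.1, Finset.univ_inter]

theorem pairwiseDisjoint_inter (hpp : IsPosetPartition V) (S : Finset α) :
    ((Finset.univ : Finset (Fin k)) : Set (Fin k)).PairwiseDisjoint fun i => V i ∩ S :=
  fun i _ j _ hij => (hpp.1 i j hij).mono Finset.inter_subset_left Finset.inter_subset_left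

theorem eRel_eq_sum_lt_add_sum_diag (hpp : IsPosetPartition V) (S T : Finset α) :
    eRel S T = ∑ p ∈ Finset.univ.filter (fun p : Fin k × Fin k => p.1 < p.2),
        eRel (V p.1 ∩ S) (V p.2 ∩ T) + ∑ i, eRel (V i ∩ S) (V i ∩ T) := by
  have hbackward : ∀ p ∈ Finset.univ.filter (fun p : Fin k × Fin k => p.1 < p.2),
      eRel (V p.swap.1 ∩ S) (V p.swap.2 ∩ T) = 0 := fun p hp =>
    eRel_eq_zero fun x hx y hy => hpp.2.2 p.2 p.1 (Finset.mem_filter.mp hp).2 x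
      (Finset.mem_of_mem_inter_left hx) y (Finset.mem_of_mem_inter_left hy)
  conv_lhs => rw [← hpp.biUnion_inter S, ← hpp.biUnion_inter T,
    eRel_biUnion (hpp.pairwiseDisjoint_inter S) (hpp.pairwiseDisjoint_inter T),
    ← Finset.sum_product', Finset.univ_product_univ,
    sum_prod_eq_sum_lt_add_sum_diag_add_sum_lt_swap (fun p => eRel (V p.1 ∩ S) (V p.2 ∩ T)),
    Finset.sum_eq_zero hbackward, add_zero]

end IsPosetPartition

namespace IsRegularPartition

variable {α : Type*} [Fintype α] [PartialOrder α] {ε : ℝ} {k : ℕ} {V : Fin k → Finset α}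

theorem sum_choose_two_le (hε : 0 ≤ ε) (hpp : IsPosetPartition V)
    (hreg : IsRegularPartition ε V) :
    ∑ i, ((V i).card.choose 2 : ℝ) ≤ ε * (((Fintype.card α).choose 2 : ℕ) : ℝ) := by
  have h := sum_choose_two_le_mul_choose_two Finset.univ (fun i => (V i).card) hε
    (by rw [hpp.sum_card]; exact fun i _ => hreg.1 i)
  rwa [hpp.sum_card] at h

theorem sum_abs_eRel_sub_le (hε : 0 ≤ ε) (hpp : IsPosetPartition V)
    (hreg : IsRegularPartition ε V) (S T : Finset α) :
    ∑ p ∈ Finset.univ.filter (fun p : Fin k × Fin k => p.1 < p.2),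
        |(eRel (V p.1 ∩ S) (V p.2 ∩ T) : ℝ) -
          dens (V p.1) (V p.2) * ((V p.1 ∩ S).card : ℝ) * ((V p.2 ∩ T).card : ℝ)| ≤
      2 * ε * (((Fintype.card α).choose 2 : ℕ) : ℝ) := by
  set C : ℝ := (((Fintype.card α).choose 2 : ℕ) : ℝ)
  set w : Fin k × Fin k → ℝ := fun p => ((V p.1).card : ℝ) * (V p.2).card
  have hterm : ∀ p ∈ Finset.univ.filter (fun p : Fin k × Fin k => p.1 < p.2),
      |(eRel (V p.1 ∩ S) (V p.2 ∩ T) : ℝ) -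
          dens (V p.1) (V p.2) * ((V p.1 ∩ S).card : ℝ) * ((V p.2 ∩ T).card : ℝ)| ≤
        ε * w p + if ¬ IsRegularPair ε (V p.1) (V p.2) then w p else 0 := by
    intro p _
    by_cases hr : IsRegularPair ε (V p.1) (V p.2)
    · rw [if_neg (not_not.mpr hr), add_zero]
      exact hr.abs_eRel_sub_dens_mul_le Finset.inter_subset_left Finset.inter_subset_left
    · rw [if_pos hr]
      refine (abs_eRel_sub_dens_mul_le _ _ _ _).trans ?_
      have hεw : 0 ≤ ε * w p := by positivity
      have hw : ((V p.1 ∩ S).card : ℝ) * (V p.2 ∩ T).card ≤ w p := by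
        show _ ≤ ((V p.1).card : ℝ) * (V p.2).card
        gcongr <;> exact Finset.inter_subset_left
      linarith
  have hcross : ∑ p ∈ Finset.univ.filter (fun p : Fin k × Fin k => p.1 < p.2), w p ≤ C := by
    have h := sum_lt_mul_le_choose_two fun i => (V i).card
    rwa [hpp.sum_card] at h
  have hirregular : ∑ p ∈ Finset.univ.filter (fun p : Fin k × Fin k => p.1 < p.2),
      (if ¬ IsRegularPair ε (V p.1) (V p.2) then w p else 0) ≤ ε * C := by
    rw [← Finset.sum_filter, Finset.filter_filter]
    exact hreg.2
  calc _ ≤ _ := Finset.sum_le_sum hterm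
    _ = ε * ∑ p ∈ Finset.univ.filter (fun p : Fin k × Fin k => p.1 < p.2), w p +
          ∑ p ∈ Finset.univ.filter (fun p : Fin k × Fin k => p.1 < p.2),
            (if ¬ IsRegularPair ε (V p.1) (V p.2) then w p else 0) := by
        rw [Finset.sum_add_distrib, Finset.mul_sum]
    _ ≤ ε * C + ε * C := add_le_add (mul_le_mul_of_nonneg_left hcross hε) hirregular
    _ = 2 * ε * C := by ring

end IsRegularPartition

theorem stmt13 {α : Type*} [Fintype α] [PartialOrder α] (ε : ℝ) (hε : 0 < ε)
    {k : ℕ} (V : Fin k → Finset α)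
    (hpp : IsPosetPartition V) (hreg : IsRegularPartition ε V)
    (S T : Finset α) :
    |(eRel S T : ℝ) -
        ∑ p ∈ Finset.univ.filter (fun p : Fin k × Fin k => p.1 < p.2),
          dens (V p.1) (V p.2) * ((V p.1 ∩ S).card : ℝ) * ((V p.2 ∩ T).card : ℝ)| ≤
      3 * ε * (((Fintype.card α).choose 2 : ℕ) : ℝ) := by
  have hdiag : ∑ i, (eRel (V i ∩ S) (V i ∩ T) : ℝ) ≤
      ε * (((Fintype.card α).choose 2 : ℕ) : ℝ) :=
    (Finset.sum_le_sum fun i _ => by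
      exact_mod_cast eRel_le_choose_two Finset.inter_subset_left Finset.inter_subset_left).trans
      (hreg.sum_choose_two_le hε.le hpp)
  have hcross := hreg.sum_abs_eRel_sub_le hε.le hpp S T
  rw [hpp.eRel_eq_sum_lt_add_sum_diag S T, Nat.cast_add, Nat.cast_sum, Nat.cast_sum,
    add_sub_right_comm, ← Finset.sum_sub_distrib]
  have hdiag_nonneg : 0 ≤ ∑ i, (eRel (V i ∩ S) (V i ∩ T) : ℝ) :=
    Finset.sum_nonneg fun i _ => Nat.cast_nonneg _
  refine (abs_add_le _ _).trans ?_
  rw [abs_of_nonneg hdiag_nonneg]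
  calc _ ≤ _ := add_le_add_left (Finset.abs_sum_le_sum_abs _ _) _
    _ ≤ 2 * ε * (((Fintype.card α).choose 2 : ℕ) : ℝ) +
          ε * (((Fintype.card α).choose 2 : ℕ) : ℝ) := add_le_add hcross hdiag
    _ = _ := by ring
end

section
/- König-type compactness for partitions: let {A_b} be sets indexed by finite binary sequences b such that A_{b,0} and A_{b,1} partition A_b, in a probability space (S,F,μ). If limsup over n of sup over sequences b of length n of μ(A_b) equals ε > 0, then there exists an infinite binary sequence (b₁,b₂,…) with μ(∩_{n≥1} A_{b₁,…,b_n}) ≥ ε. -/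
/-! The value `F b := limsup_n sup_{|c| = n} μ (A (b ++ c))` satisfies `F [] = ε`, `F b ≤ μ (A b)`
and `F b = max (F (b ++ [false])) (F (b ++ [true]))`, since the supremum over extensions of length
`n + 1` is the larger of the suprema over the two children. Following a child on which `F` stays
`≥ ε` gives an infinite branch along which every `A b` has measure `≥ ε`; the sets decrease, so by
continuity from above their intersection has measure `≥ ε` as well. -/

open MeasureTheory Filter
open scoped ENNReal

theorem exists_forall_ofFn_of_forall_exists_append {P : List Bool → Prop} (hnil : P [])
    (hstep : ∀ b, P b → ∃ x, P (b ++ [x])) :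
    ∃ f : ℕ → Bool, ∀ n, P (List.ofFn fun i : Fin n => f i) := by
  classical
  let next (b : List Bool) : Bool := !decide (P (b ++ [false]))
  have hnext : ∀ b, P b → P (b ++ [next b]) := by
    intro b hb
    by_cases hfalse : P (b ++ [false])
    · simp [next, hfalse]
    · obtain ⟨_ | _, hx⟩ := hstep b hb
      exacts [absurd hx hfalse, by simpa [next, hfalse] using hx]
  let path (n : ℕ) : List Bool := Nat.rec [] (fun _ b => b ++ [next b]) n
  have hpath : ∀ n, P (path n) := fun n => by
    induction n with
    | zero => exact hnil
    | succ n ih => exact hnext _ ih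
  refine ⟨fun n => next (path n), fun n => ?_⟩
  convert hpath n
  induction n with
  | zero => rfl
  | succ n ih => rw [List.ofFn_succ_last]; simp only [Fin.val_castSucc, ih, Fin.val_last]; rfl

theorem apply_append_le_of_forall_append_singleton_le {α β : Type*} [Preorder β]
    {g : List α → β} (hg : ∀ b x, g (b ++ [x]) ≤ g b) (b c : List α) : g (b ++ c) ≤ g b := by
  induction c using List.reverseRecOn with
  | nil => simp
  | append_singleton c x ih => exact (List.append_assoc b c [x] ▸ hg (b ++ c) x).trans ih

section ExtensionLimsup

variable {α : Type*} [CompleteLinearOrder α] (g : List Bool → α)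

def extensionLimsup (b : List Bool) : α :=
  limsup (fun n => ⨆ c : {l : List Bool // l.length = n}, g (b ++ c.1)) atTop

theorem iSup_length_succ_append (b : List Bool) (n : ℕ) :
    ⨆ c : {l : List Bool // l.length = n + 1}, g (b ++ c.1) =
      max (⨆ c : {l : List Bool // l.length = n}, g (b ++ [false] ++ c.1))
        (⨆ c : {l : List Bool // l.length = n}, g (b ++ [true] ++ c.1)) := by
  apply le_antisymm
  · refine iSup_le ?_
    rintro ⟨_ | ⟨x, t⟩, hc⟩
    · simp at hc
    · have ht : t.length = n := by simpa using hc
      rw [show b ++ x :: t = b ++ [x] ++ t by simp]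
      cases x
      exacts [le_max_of_le_left (le_iSup_of_le ⟨t, ht⟩ le_rfl),
        le_max_of_le_right (le_iSup_of_le ⟨t, ht⟩ le_rfl)]
  · refine max_le (iSup_le fun c => ?_) (iSup_le fun c => ?_)
    exacts [le_iSup_of_le ⟨false :: c.1, by simp [c.2]⟩ (by simp),
      le_iSup_of_le ⟨true :: c.1, by simp [c.2]⟩ (by simp)]

theorem extensionLimsup_eq_max (b : List Bool) :
    extensionLimsup g b =
      max (extensionLimsup g (b ++ [false])) (extensionLimsup g (b ++ [true])) := by
  rw [extensionLimsup, ← limsup_nat_add _ 1]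
  simp_rw [iSup_length_succ_append]
  exact limsup_max

theorem extensionLimsup_le (hg : ∀ b c, g (b ++ c) ≤ g b) (b : List Bool) :
    extensionLimsup g b ≤ g b :=
  limsup_le_of_le (by isBoundedDefault) (Eventually.of_forall fun _ => iSup_le fun c => hg b c.1)

end ExtensionLimsup

theorem stmt14_general {S : Type*} [MeasurableSpace S] (μ : Measure S) [IsProbabilityMeasure μ]
    (A : List Bool → Set S) (hmeas : ∀ b, MeasurableSet (A b))
    (hcover : ∀ b : List Bool, A (b ++ [false]) ∪ A (b ++ [true]) = A b)
    (ε : ℝ≥0∞)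
    (hlimsup : Filter.limsup
      (fun n => ⨆ b : {l : List Bool // l.length = n}, μ (A b.1)) Filter.atTop = ε) :
    ∃ f : ℕ → Bool, ε ≤ μ (⋂ n : ℕ, A (List.ofFn fun i : Fin (n + 1) => f i)) := by
  have hsub : ∀ b c, A (b ++ c) ⊆ A b :=
    apply_append_le_of_forall_append_singleton_le fun b x => by
      rw [← hcover b]; cases x
      exacts [Set.subset_union_left, Set.subset_union_right]
  have hF : extensionLimsup (fun b => μ (A b)) [] = ε := by simpa [extensionLimsup] using hlimsup
  obtain ⟨f, hf⟩ := exists_forall_ofFn_of_forall_exists_append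
    (P := fun b => ε ≤ extensionLimsup (fun b => μ (A b)) b) hF.ge
    fun b hb => by
      rw [extensionLimsup_eq_max, le_max_iff] at hb
      exact hb.elim (⟨false, ·⟩) (⟨true, ·⟩)
  have hanti : Antitone fun n => A (List.ofFn fun i : Fin (n + 1) => f i) :=
    antitone_nat_of_succ_le fun n => by
      rw [List.ofFn_succ_last (n := n + 1)]
      exact hsub _ _
  refine ⟨f, ?_⟩
  rw [hanti.measure_iInter (fun n => (hmeas _).nullMeasurableSet) ⟨0, measure_ne_top μ _⟩]
  exact le_iInf fun n =>
    (hf (n + 1)).trans (extensionLimsup_le _ (fun b c => measure_mono (hsub b c)) _)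

theorem stmt14 {S : Type*} [MeasurableSpace S] (μ : Measure S) [IsProbabilityMeasure μ]
    (A : List Bool → Set S) (hmeas : ∀ b, MeasurableSet (A b))
    (hcover : ∀ b : List Bool, A (b ++ [false]) ∪ A (b ++ [true]) = A b)
    (hdisj : ∀ b : List Bool, Disjoint (A (b ++ [false])) (A (b ++ [true])))
    (ε : ℝ≥0∞) (hε : 0 < ε)
    (hlimsup : Filter.limsup
      (fun n => ⨆ b : {l : List Bool // l.length = n}, μ (A b.1)) Filter.atTop = ε) :
    ∃ f : ℕ → Bool, ε ≤ μ (⋂ n : ℕ, A (List.ofFn fun i : Fin (n + 1) => f i)) :=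
  stmt14_general μ A hmeas hcover ε hlimsup
end

section
/- Let W : [0,1]² → [0,1] be a Lebesgue measurable almost kernel for <, and define U₁ by: U₁(x,y) = W(x,y) at Lebesgue points of W, U₁(x,y) = 1 at density points of {(x,y) : W(x,y) = 1}, and U₁(x,y) = 0 otherwise. Then (i) if U₁(x,y) > 0 then x < y, and (ii) if U₁(x,y) > 0 and U₁(y,z) > 0 then U₁(x,z) = 1; moreover U₁ = W almost everywhere. -/
open MeasureTheory

/-- The unit square `[0,1]²`. -/
def unitSq : Set (ℝ × ℝ) := Set.Icc (0:ℝ) 1 ×ˢ Set.Icc (0:ℝ) 1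

/-- The square neighbourhood `(x ± ε) × (y ± ε)` of `p = (x,y)`, relative to `[0,1]²`. -/
def nbhd (p : ℝ × ℝ) (ε : ℝ) : Set (ℝ × ℝ) :=
  (Set.Ioo (p.1 - ε) (p.1 + ε) ×ˢ Set.Ioo (p.2 - ε) (p.2 + ε)) ∩ unitSq

/-- `p` is a Lebesgue point of `W` (relative to the square neighbourhoods in `[0,1]²`). -/
def IsLebPoint (W : ℝ × ℝ → ℝ) (p : ℝ × ℝ) : Prop :=
  Filter.Tendsto
    (fun ε : ℝ => (∫ q in nbhd p ε, |W q - W p|) / (volume (nbhd p ε)).toReal)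
    (nhdsWithin 0 (Set.Ioi 0)) (nhds 0)

/-- `p` is a density point of the set `E` (relative to square neighbourhoods in `[0,1]²`). -/
def IsDensityPoint (E : Set (ℝ × ℝ)) (p : ℝ × ℝ) : Prop :=
  Filter.Tendsto
    (fun ε : ℝ => (volume (E ∩ nbhd p ε)).toReal / (volume (nbhd p ε)).toReal)
    (nhdsWithin 0 (Set.Ioi 0)) (nhds 1)

/-!
If `U₁ p > 0` then `p` is a density point of `{W > 0}`: at a Lebesgue point `p` of `W` by
Markov's inequality, and otherwise because `p` is a density point of `{W = 1}`.

(i) `{W > 0}` lies a.e. above the diagonal, while a square centred on or below the diagonal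
lies at most half above it.

(ii) Integrating the a.e. transitivity of `W` over `nbhd₁ x ε × nbhd₁ y ε × nbhd₁ z ε` (Fubini)
shows that the density ratio of `{W = 1}` at `(x, z)` is at least the sum of those of `{W > 0}`
at `(x, y)` and at `(y, z)`, minus one; so `(x, z)` is a density point of `{W = 1}`, and if it
is a Lebesgue point of `W` then `W (x, z) = 1`.

(iii) Lebesgue differentiation theorem: near interior points of `[0,1]²` the sets `nbhd p ε`
are the balls of the sup metric on `ℝ × ℝ`.
-/

open Set Filter Topology

lemma measurableSet_unitSq : MeasurableSet unitSq := measurableSet_Icc.prod measurableSet_Icc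

lemma volume_restrict_Icc_prod :
    (volume.restrict (Icc (0:ℝ) 1)).prod (volume.restrict (Icc (0:ℝ) 1)) =
      volume.restrict unitSq := by
  rw [Measure.prod_restrict, ← Measure.volume_eq_prod, unitSq]

lemma integrableOn_unitSq_of_mem_Icc {W : ℝ × ℝ → ℝ}
    (hWmeas : AEMeasurable W (volume.restrict unitSq)) (hWrange : ∀ p ∈ unitSq, W p ∈ Icc (0:ℝ) 1) :
    IntegrableOn W unitSq :=
  have : IsFiniteMeasure (volume.restrict unitSq) :=
    isFiniteMeasure_restrict.2 (isCompact_Icc.prod isCompact_Icc).measure_lt_top.ne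
  Integrable.of_mem_Icc 0 1 hWmeas ((ae_restrict_mem measurableSet_unitSq).mono hWrange)

def nbhd₁ (x ε : ℝ) : Set ℝ := Ioo (x - ε) (x + ε) ∩ Icc 0 1

lemma nbhd_eq_prod (p : ℝ × ℝ) (ε : ℝ) : nbhd p ε = nbhd₁ p.1 ε ×ˢ nbhd₁ p.2 ε := by
  rw [nbhd, unitSq, prod_inter_prod, nbhd₁, nbhd₁]

lemma nbhd_subset_unitSq (p : ℝ × ℝ) (ε : ℝ) : nbhd p ε ⊆ unitSq := inter_subset_right

lemma measurableSet_nbhd (p : ℝ × ℝ) (ε : ℝ) : MeasurableSet (nbhd p ε) :=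
  (measurableSet_Ioo.prod measurableSet_Ioo).inter measurableSet_unitSq

lemma volume_nbhd₁_pos {x ε : ℝ} (hx : x ∈ Icc (0:ℝ) 1) (hε : 0 < ε) :
    0 < volume (nbhd₁ x ε) := by
  have hsub : Ioo (max (x - ε) 0) (min (x + ε) 1) ⊆ nbhd₁ x ε := fun a ⟨ha, ha'⟩ =>
    ⟨⟨(le_max_left _ _).trans_lt ha, ha'.trans_le (min_le_left _ _)⟩,
      ((le_max_right _ _).trans_lt ha).le, (ha'.trans_le (min_le_right _ _)).le⟩
  refine lt_of_lt_of_le ?_ (measure_mono hsub)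
  rw [Real.volume_Ioo, ENNReal.ofReal_pos, sub_pos]
  exact max_lt (lt_min (by linarith) (by linarith [hx.2])) (lt_min (by linarith [hx.1]) one_pos)

lemma volume_nbhd₁_ne_top (x ε : ℝ) : volume (nbhd₁ x ε) ≠ ⊤ :=
  measure_ne_top_of_subset inter_subset_left measure_Ioo_lt_top.ne

lemma volume_nbhd_ne_top (p : ℝ × ℝ) (ε : ℝ) : volume (nbhd p ε) ≠ ⊤ := by
  rw [nbhd_eq_prod, Measure.volume_eq_prod, Measure.prod_prod]
  exact ENNReal.mul_ne_top (volume_nbhd₁_ne_top _ _) (volume_nbhd₁_ne_top _ _)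

lemma measureReal_nbhd₁_pos {x ε : ℝ} (hx : x ∈ Icc (0:ℝ) 1) (hε : 0 < ε) :
    0 < volume.real (nbhd₁ x ε) :=
  ENNReal.toReal_pos (volume_nbhd₁_pos hx hε).ne' (volume_nbhd₁_ne_top x ε)

lemma measureReal_nbhd (p : ℝ × ℝ) (ε : ℝ) :
    volume.real (nbhd p ε) = volume.real (nbhd₁ p.1 ε) * volume.real (nbhd₁ p.2 ε) := by
  rw [nbhd_eq_prod, Measure.volume_eq_prod, measureReal_prod_prod]

lemma measureReal_nbhd_pos {p : ℝ × ℝ} {ε : ℝ} (hp : p ∈ unitSq) (hε : 0 < ε) :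
    0 < volume.real (nbhd p ε) := by
  rw [measureReal_nbhd]
  exact mul_pos (measureReal_nbhd₁_pos hp.1 hε) (measureReal_nbhd₁_pos hp.2 hε)

noncomputable def densityRatio (E : Set (ℝ × ℝ)) (p : ℝ × ℝ) (ε : ℝ) : ℝ :=
  volume.real (E ∩ nbhd p ε) / volume.real (nbhd p ε)

lemma isDensityPoint_iff {E : Set (ℝ × ℝ)} {p : ℝ × ℝ} :
    IsDensityPoint E p ↔ Tendsto (densityRatio E p) (𝓝[>] 0) (𝓝 1) := Iff.rfl

lemma densityRatio_nonneg (E : Set (ℝ × ℝ)) (p : ℝ × ℝ) (ε : ℝ) : 0 ≤ densityRatio E p ε :=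
  div_nonneg measureReal_nonneg measureReal_nonneg

lemma densityRatio_le_one (E : Set (ℝ × ℝ)) (p : ℝ × ℝ) (ε : ℝ) : densityRatio E p ε ≤ 1 :=
  div_le_one_of_le₀ (measureReal_mono inter_subset_right (volume_nbhd_ne_top p ε))
    measureReal_nonneg

lemma densityRatio_mono_ae {E F : Set (ℝ × ℝ)}
    (h : ∀ᵐ q ∂volume.restrict unitSq, q ∈ E → q ∈ F) (p : ℝ × ℝ) (ε : ℝ) :
    densityRatio E p ε ≤ densityRatio F p ε := by
  have hN := nbhd_subset_unitSq p ε
  have hle : volume (E ∩ nbhd p ε) ≤ volume (F ∩ nbhd p ε) := by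
    rw [← Measure.restrict_eq_self volume (inter_subset_right.trans hN),
      ← Measure.restrict_eq_self volume (inter_subset_right.trans hN)]
    exact measure_mono_ae (h.mono fun q hq hqE => ⟨hq hqE.1, hqE.2⟩)
  exact div_le_div_of_nonneg_right
    (ENNReal.toReal_mono (measure_ne_top_of_subset inter_subset_right
      (volume_nbhd_ne_top p ε)) hle) measureReal_nonneg

lemma one_le_densityRatio_add {E F : Set (ℝ × ℝ)} {p : ℝ × ℝ} {ε : ℝ} (hp : p ∈ unitSq)
    (hε : 0 < ε) (h : nbhd p ε ⊆ E ∪ F) : 1 ≤ densityRatio E p ε + densityRatio F p ε := by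
  rw [densityRatio, densityRatio, ← add_div, one_le_div (measureReal_nbhd_pos hp hε)]
  calc volume.real (nbhd p ε) ≤ volume.real ((E ∩ nbhd p ε) ∪ (F ∩ nbhd p ε)) :=
        measureReal_mono (fun q hq => (h hq).imp (⟨·, hq⟩) (⟨·, hq⟩))
          (measure_ne_top_of_subset (union_subset inter_subset_right inter_subset_right)
            (volume_nbhd_ne_top p ε))
    _ ≤ _ := measureReal_union_le _ _

lemma densityRatio_add_densityRatio_compl {E : Set (ℝ × ℝ)}
    (hE : NullMeasurableSet E (volume.restrict unitSq)) {p : ℝ × ℝ} {ε : ℝ} (hp : p ∈ unitSq)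
    (hε : 0 < ε) : densityRatio E p ε + densityRatio Eᶜ p ε = 1 := by
  rw [densityRatio, densityRatio, ← add_div, div_eq_one_iff_eq (measureReal_nbhd_pos hp hε).ne']
  have hN := nbhd_subset_unitSq p ε
  have key := measureReal_inter_add_sdiff₀ (μ := volume.restrict unitSq) (s := nbhd p ε) hE
    (by rw [Measure.restrict_eq_self _ hN]; exact volume_nbhd_ne_top p ε)
  simp only [measureReal_def, Measure.restrict_eq_self _ (inter_subset_left.trans hN),
    Measure.restrict_eq_self _ (sdiff_subset.trans hN), Measure.restrict_eq_self _ hN] at key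
  rwa [sdiff_eq, inter_comm, inter_comm (nbhd p ε)] at key

lemma isDensityPoint_of_one_le_add {E : Set (ℝ × ℝ)} {p : ℝ × ℝ} {f : ℝ → ℝ}
    (hf : Tendsto f (𝓝[>] 0) (𝓝 0)) (h : ∀ᶠ ε in 𝓝[>] 0, 1 ≤ densityRatio E p ε + f ε) :
    IsDensityPoint E p := by
  rw [isDensityPoint_iff]
  have hlow : Tendsto (fun ε => 1 - f ε) (𝓝[>] 0) (𝓝 1) := by
    simpa using tendsto_const_nhds.sub hf
  exact tendsto_of_tendsto_of_tendsto_of_le_of_le' hlow tendsto_const_nhds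
    (h.mono fun ε hε => by linarith) (Eventually.of_forall (densityRatio_le_one E p))

lemma IsDensityPoint.mono_ae {E F : Set (ℝ × ℝ)} {p : ℝ × ℝ} (hE : IsDensityPoint E p)
    (h : ∀ᵐ q ∂volume.restrict unitSq, q ∈ E → q ∈ F) : IsDensityPoint F p :=
  tendsto_of_tendsto_of_tendsto_of_le_of_le hE tendsto_const_nhds (densityRatio_mono_ae h p)
    (densityRatio_le_one F p)

lemma IsDensityPoint.tendsto_densityRatio_compl {E : Set (ℝ × ℝ)} {p : ℝ × ℝ}
    (hE : IsDensityPoint E p) (hEm : NullMeasurableSet E (volume.restrict unitSq))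
    (hp : p ∈ unitSq) : Tendsto (densityRatio Eᶜ p) (𝓝[>] 0) (𝓝 0) := by
  have h : Tendsto (fun ε => 1 - densityRatio E p ε) (𝓝[>] 0) (𝓝 0) := by
    simpa using (tendsto_const_nhds (x := (1:ℝ))).sub (isDensityPoint_iff.1 hE)
  refine h.congr' ?_
  filter_upwards [self_mem_nhdsWithin] with ε hε
  linarith [densityRatio_add_densityRatio_compl hEm hp hε]

lemma IsLebPoint.tendsto_densityRatio_le_abs_sub {W : ℝ × ℝ → ℝ} {p : ℝ × ℝ} {c : ℝ}
    (hL : IsLebPoint W p) (hW : IntegrableOn W unitSq) (hc : 0 < c) :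
    Tendsto (densityRatio {q | c ≤ |W q - W p|} p) (𝓝[>] 0) (𝓝 0) := by
  have hmarkov : ∀ ε, c * densityRatio {q | c ≤ |W q - W p|} p ε ≤
      (∫ q in nbhd p ε, |W q - W p|) / (volume (nbhd p ε)).toReal := by
    intro ε
    have hint : IntegrableOn (fun q => |W q - W p|) (nbhd p ε) :=
      ((hW.mono_set (nbhd_subset_unitSq p ε)).sub
        (integrableOn_const (volume_nbhd_ne_top p ε))).abs
    have h := mul_meas_ge_le_integral_of_nonneg (μ := volume.restrict (nbhd p ε))
      (ae_of_all _ fun q => abs_nonneg _) hint c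
    rw [measureReal_restrict_apply' (measurableSet_nbhd p ε)] at h
    rw [densityRatio, ← mul_div_assoc]
    exact div_le_div_of_nonneg_right h measureReal_nonneg
  have hlim := (show Tendsto _ _ _ from hL).div_const c
  rw [zero_div] at hlim
  refine tendsto_of_tendsto_of_tendsto_of_le_of_le tendsto_const_nhds hlim
    (densityRatio_nonneg _ p) fun ε => ?_
  rw [le_div_iff₀ hc, mul_comm]
  exact hmarkov ε

lemma IsLebPoint.isDensityPoint_abs_sub_lt {W : ℝ × ℝ → ℝ} {p : ℝ × ℝ} {c : ℝ}
    (hL : IsLebPoint W p) (hW : IntegrableOn W unitSq) (hp : p ∈ unitSq) (hc : 0 < c) :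
    IsDensityPoint {q | |W q - W p| < c} p :=
  isDensityPoint_of_one_le_add (hL.tendsto_densityRatio_le_abs_sub hW hc) <| by
    filter_upwards [self_mem_nhdsWithin] with ε hε
    exact one_le_densityRatio_add hp hε fun q _ => lt_or_ge |W q - W p| c

lemma IsLebPoint.eq_of_isDensityPoint {W : ℝ × ℝ → ℝ} {p : ℝ × ℝ} {E : Set (ℝ × ℝ)} {c : ℝ}
    (hL : IsLebPoint W p) (hW : IntegrableOn W unitSq) (hE : IsDensityPoint E p)
    (hEc : ∀ q ∈ E, W q = c) : W p = c := by
  by_contra hne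
  have hpos : 0 < |c - W p| := abs_pos.2 (sub_ne_zero.2 (Ne.symm hne))
  have hle : ∀ ε, densityRatio E p ε ≤ densityRatio {q | |c - W p| ≤ |W q - W p|} p ε :=
    densityRatio_mono_ae (ae_of_all _ fun q hq =>
      show |c - W p| ≤ |W q - W p| by rw [hEc q hq]) p
  have := le_of_tendsto_of_tendsto' hE (hL.tendsto_densityRatio_le_abs_sub hW hpos) hle
  norm_num at this

lemma nbhd_eq_ball {p : ℝ × ℝ} {ε : ℝ} (h : Metric.ball p ε ⊆ unitSq) :
    nbhd p ε = Metric.ball p ε := by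
  obtain ⟨a, b⟩ := p
  rw [nbhd, ← ball_prod_same, Real.ball_eq_Ioo, Real.ball_eq_Ioo, inter_eq_left]
  rwa [← ball_prod_same, Real.ball_eq_Ioo, Real.ball_eq_Ioo] at h

lemma closedBall_ae_eq_ball {E : Type*} [NormedAddCommGroup E] [NormedSpace ℝ E]
    [MeasurableSpace E] [BorelSpace E] [FiniteDimensional ℝ E] [Nontrivial E] (μ : Measure E)
    [μ.IsAddHaarMeasure] (x : E) (r : ℝ) : Metric.closedBall x r =ᵐ[μ] Metric.ball x r := by
  refine ae_eq_set.2 ⟨?_, by rw [sdiff_eq_empty.2 Metric.ball_subset_closedBall, measure_empty]⟩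
  rw [Metric.closedBall_sdiff_ball]
  exact Measure.addHaar_sphere μ x r

lemma ae_mem_interior_unitSq : ∀ᵐ p ∂volume.restrict unitSq, p ∈ interior unitSq := by
  rw [ae_restrict_iff' measurableSet_unitSq, ae_iff]
  refine measure_mono_null (fun p hp => ?_)
    (((convex_Icc (0:ℝ) 1).prod (convex_Icc (0:ℝ) 1)).addHaar_frontier volume)
  push Not at hp
  exact ⟨subset_closure hp.1, hp.2⟩

lemma ae_isLebPoint {W : ℝ × ℝ → ℝ} (hW : IntegrableOn W unitSq) :
    ∀ᵐ p ∂volume.restrict unitSq, IsLebPoint W p := by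
  set f := unitSq.indicator W
  have hf : LocallyIntegrable f :=
    ((integrable_indicator_iff measurableSet_unitSq).2 hW).locallyIntegrable
  filter_upwards
    [ae_restrict_of_ae (IsUnifLocDoublingMeasure.ae_tendsto_average_norm_sub volume hf 1),
    ae_mem_interior_unitSq, ae_restrict_mem measurableSet_unitSq] with p hlim hint hp
  have hlim' := hlim (fun _ => p) id tendsto_id
    (eventually_mem_nhdsWithin.mono fun ε hε => Metric.mem_closedBall_self (by simpa using hε.le))
  obtain ⟨r, hr, hball⟩ := Metric.mem_nhds_iff.1 (mem_interior_iff_mem_nhds.1 hint)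
  refine hlim'.congr' ?_
  filter_upwards [Ioo_mem_nhdsGT hr] with ε hε
  have hN : nbhd p ε = Metric.ball p ε :=
    nbhd_eq_ball ((Metric.ball_subset_ball hε.2.le).trans hball)
  have hae : Metric.closedBall p ε =ᵐ[volume] nbhd p ε := hN ▸ closedBall_ae_eq_ball volume p ε
  rw [id, setAverage_eq, setIntegral_congr_set hae, measureReal_congr hae, smul_eq_mul,
    inv_mul_eq_div, measureReal_def]
  congr 1
  refine setIntegral_congr_fun (measurableSet_nbhd p ε) fun q hq => ?_
  simp [f, indicator_of_mem (nbhd_subset_unitSq p ε hq), indicator_of_mem hp, Real.norm_eq_abs]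

lemma two_mul_measure_prod_inter_lt_le (μ : Measure ℝ) [SFinite μ] (s : Set ℝ) :
    2 * μ.prod μ (s ×ˢ s ∩ {q | q.1 < q.2}) ≤ μ.prod μ (s ×ˢ s) := by
  have hswap : μ.prod μ (s ×ˢ s ∩ {q | q.2 < q.1}) = μ.prod μ (s ×ˢ s ∩ {q | q.1 < q.2}) :=
    calc _ = μ.prod μ (MeasurableEquiv.prodComm ⁻¹' (s ×ˢ s ∩ {q | q.1 < q.2})) := by
          congr 1; ext q; simp [MeasurableEquiv.prodComm, and_comm]
      _ = _ := Measure.measurePreserving_swap.measure_preimage_equiv _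
  calc 2 * μ.prod μ (s ×ˢ s ∩ {q | q.1 < q.2})
      = μ.prod μ (s ×ˢ s ∩ {q | q.1 < q.2}) + μ.prod μ (s ×ˢ s ∩ {q | q.2 < q.1}) := by
        rw [hswap, two_mul]
    _ ≤ μ.prod μ (s ×ˢ s ∩ {q | q.1 < q.2}) + μ.prod μ (s ×ˢ s \ {q | q.1 < q.2}) := by
        gcongr
        exact fun q ⟨hs, (hlt : q.2 < q.1)⟩ => ⟨hs, fun h => lt_asymm h hlt⟩
    _ = μ.prod μ (s ×ˢ s) := measure_inter_add_sdiff _ measurableSet_lt'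

lemma densityRatio_lt_diag_le_half (x ε : ℝ) : densityRatio {q | q.1 < q.2} (x, x) ε ≤ 1 / 2 := by
  have h := two_mul_measure_prod_inter_lt_le volume (nbhd₁ x ε)
  rw [← Measure.volume_eq_prod, ← nbhd_eq_prod (x, x), inter_comm] at h
  refine div_le_of_le_mul₀ measureReal_nonneg (by norm_num) ?_
  have h' := ENNReal.toReal_mono (volume_nbhd_ne_top _ _) h
  rw [ENNReal.toReal_mul] at h'
  simp only [measureReal_def]
  norm_num at h' ⊢
  linarith

lemma eventually_densityRatio_lt_le_half {p : ℝ × ℝ} (hp : p.2 ≤ p.1) :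
    ∀ᶠ ε in 𝓝[>] 0, densityRatio {q | q.1 < q.2} p ε ≤ 1 / 2 := by
  obtain ⟨x, y⟩ := p
  obtain hlt | heq := hp.lt_or_eq
  · filter_upwards [Ioo_mem_nhdsGT (show 0 < (x - y) / 2 by simp only at hlt; linarith)]
      with ε hε
    have hempty : {q : ℝ × ℝ | q.1 < q.2} ∩ nbhd (x, y) ε = ∅ := by
      refine eq_empty_iff_forall_notMem.2 fun q ⟨(hq : q.1 < q.2), hqN⟩ => ?_
      linarith [hqN.1.1.1, hqN.1.2.2, hε.2]
    rw [densityRatio, hempty, measureReal_empty, zero_div]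
    norm_num
  · simp only at heq
    subst heq
    exact Eventually.of_forall (densityRatio_lt_diag_le_half _)

lemma IsDensityPoint.fst_lt_snd {E : Set (ℝ × ℝ)} {p : ℝ × ℝ} (hE : IsDensityPoint E p)
    (h : ∀ᵐ q ∂volume.restrict unitSq, q ∈ E → q.1 < q.2) : p.1 < p.2 := by
  by_contra! hle
  have := le_of_tendsto hE ((eventually_densityRatio_lt_le_half hle).mono
    fun ε hε => (densityRatio_mono_ae h p ε).trans hε)
  norm_num at this

lemma measure_prod_le_of_ae_trans {α : Type*} [MeasurableSpace α] (μ : Measure α) [SFinite μ]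
    {P O : Set (α × α)}
    (hPO : ∀ᵐ t ∂μ.prod (μ.prod μ), (t.1, t.2.1) ∈ P → (t.2.1, t.2.2) ∈ P → (t.1, t.2.2) ∈ O)
    (A B C : Set α) :
    μ A * μ B * μ C ≤ μ.prod μ (A ×ˢ C ∩ O) * μ B + μ.prod μ (A ×ˢ B ∩ Pᶜ) * μ C +
      μ A * μ.prod μ (B ×ˢ C ∩ Pᶜ) := by
  set e₁ : (α × α) × α ≃ᵐ α × α × α := MeasurableEquiv.prodAssoc
  -- `e₂ ((a, c), b) = (a, b, c)`
  set e₂ : (α × α) × α ≃ᵐ α × α × α := MeasurableEquiv.prodAssoc.trans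
    (MeasurableEquiv.prodCongr (MeasurableEquiv.refl α) MeasurableEquiv.prodComm)
  have he₁ : MeasurePreserving e₁ ((μ.prod μ).prod μ) (μ.prod (μ.prod μ)) :=
    measurePreserving_prodAssoc μ μ μ
  have he₂ : MeasurePreserving e₂ ((μ.prod μ).prod μ) (μ.prod (μ.prod μ)) :=
    ((MeasurePreserving.id μ).prod Measure.measurePreserving_swap).comp he₁
  have hcover : A ×ˢ B ×ˢ C ≤ᵐ[μ.prod (μ.prod μ)] (e₂.symm ⁻¹' ((A ×ˢ C ∩ O) ×ˢ B) ∪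
      e₁.symm ⁻¹' ((A ×ˢ B ∩ Pᶜ) ×ˢ C) ∪ A ×ˢ (B ×ˢ C ∩ Pᶜ) : Set (α × α × α)) := by
    filter_upwards [hPO] with ⟨a, b, c⟩ h ⟨ha, hb, hc⟩
    by_cases hab : (a, b) ∈ P
    · by_cases hbc : (b, c) ∈ P
      · left; left
        exact ⟨⟨⟨ha, hc⟩, h hab hbc⟩, hb⟩
      · right
        exact ⟨ha, ⟨hb, hc⟩, hbc⟩
    · left; right
      exact ⟨⟨⟨ha, hb⟩, hab⟩, hc⟩
  calc μ A * μ B * μ C = μ.prod (μ.prod μ) (A ×ˢ B ×ˢ C) := by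
        rw [Measure.prod_prod, Measure.prod_prod, mul_assoc]
    _ ≤ μ.prod (μ.prod μ) (e₂.symm ⁻¹' ((A ×ˢ C ∩ O) ×ˢ B)) +
          μ.prod (μ.prod μ) (e₁.symm ⁻¹' ((A ×ˢ B ∩ Pᶜ) ×ˢ C)) +
          μ.prod (μ.prod μ) (A ×ˢ (B ×ˢ C ∩ Pᶜ)) :=
        (measure_mono_ae hcover).trans
          ((measure_union_le _ _).trans (add_le_add_left (measure_union_le _ _) _))
    _ = _ := by
        rw [(he₂.symm e₂).measure_preimage_equiv, (he₁.symm e₁).measure_preimage_equiv,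
          Measure.prod_prod, Measure.prod_prod, Measure.prod_prod]

lemma one_le_densityRatio_add_add {P O : Set (ℝ × ℝ)}
    (hPO : ∀ᵐ t ∂(volume.restrict (Icc (0:ℝ) 1)).prod
      ((volume.restrict (Icc (0:ℝ) 1)).prod (volume.restrict (Icc (0:ℝ) 1))),
      (t.1, t.2.1) ∈ P → (t.2.1, t.2.2) ∈ P → (t.1, t.2.2) ∈ O)
    {x y z ε : ℝ} (hx : x ∈ Icc (0:ℝ) 1) (hy : y ∈ Icc (0:ℝ) 1) (hz : z ∈ Icc (0:ℝ) 1)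
    (hε : 0 < ε) :
    1 ≤ densityRatio O (x, z) ε + densityRatio Pᶜ (x, y) ε + densityRatio Pᶜ (y, z) ε := by
  set ν := volume.restrict (Icc (0:ℝ) 1)
  have h := measure_prod_le_of_ae_trans ν hPO (nbhd₁ x ε) (nbhd₁ y ε) (nbhd₁ z ε)
  have hν : ∀ a, ν (nbhd₁ a ε) = volume (nbhd₁ a ε) := fun a =>
    Measure.restrict_eq_self _ inter_subset_right
  have hν₂ : ∀ a b (E : Set (ℝ × ℝ)),
      ν.prod ν (nbhd₁ a ε ×ˢ nbhd₁ b ε ∩ E) = volume (E ∩ nbhd (a, b) ε) := fun a b E => by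
    rw [volume_restrict_Icc_prod, ← nbhd_eq_prod (a, b), inter_comm,
      Measure.restrict_eq_self _ (inter_subset_right.trans (nbhd_subset_unitSq _ _))]
  have h' := ENNReal.toReal_mono (by finiteness) h
  rw [ENNReal.toReal_add (by finiteness) (by finiteness),
    ENNReal.toReal_add (by finiteness) (by finiteness)] at h'
  simp only [ENNReal.toReal_mul, hν, hν₂, ← measureReal_def] at h'
  have ha := measureReal_nbhd₁_pos hx hε
  have hb := measureReal_nbhd₁_pos hy hε
  have hc := measureReal_nbhd₁_pos hz hε
  calc 1 ≤ (volume.real (O ∩ nbhd (x, z) ε) * volume.real (nbhd₁ y ε) +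
        volume.real (Pᶜ ∩ nbhd (x, y) ε) * volume.real (nbhd₁ z ε) +
        volume.real (nbhd₁ x ε) * volume.real (Pᶜ ∩ nbhd (y, z) ε)) /
        (volume.real (nbhd₁ x ε) * volume.real (nbhd₁ y ε) * volume.real (nbhd₁ z ε)) :=
        (one_le_div (by positivity)).2 h'
    _ = _ := by
        simp only [densityRatio, measureReal_nbhd]
        field_simp

lemma IsDensityPoint.trans {P O : Set (ℝ × ℝ)}
    (hPO : ∀ᵐ t ∂(volume.restrict (Icc (0:ℝ) 1)).prod
      ((volume.restrict (Icc (0:ℝ) 1)).prod (volume.restrict (Icc (0:ℝ) 1))),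
      (t.1, t.2.1) ∈ P → (t.2.1, t.2.2) ∈ P → (t.1, t.2.2) ∈ O)
    (hP : NullMeasurableSet P (volume.restrict unitSq))
    {x y z : ℝ} (hx : x ∈ Icc (0:ℝ) 1) (hy : y ∈ Icc (0:ℝ) 1) (hz : z ∈ Icc (0:ℝ) 1)
    (hxy : IsDensityPoint P (x, y)) (hyz : IsDensityPoint P (y, z)) :
    IsDensityPoint O (x, z) := by
  refine isDensityPoint_of_one_le_add
    (f := fun ε => densityRatio Pᶜ (x, y) ε + densityRatio Pᶜ (y, z) ε) ?_ ?_
  · simpa using (hxy.tendsto_densityRatio_compl hP ⟨hx, hy⟩).add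
      (hyz.tendsto_densityRatio_compl hP ⟨hy, hz⟩)
  · filter_upwards [self_mem_nhdsWithin] with ε hε
    rw [← add_assoc]
    exact one_le_densityRatio_add_add hPO hx hy hz hε

theorem stmt15 (W : ℝ × ℝ → ℝ)
    (hWmeas : AEMeasurable W (volume.restrict unitSq))
    (hWrange : ∀ p ∈ unitSq, W p ∈ Set.Icc (0:ℝ) 1)
    -- `W` is an almost kernel on `([0,1], Borel, Lebesgue, <)`:
    (hax1 : ∀ᵐ p ∂((volume.restrict (Set.Icc (0:ℝ) 1)).prod
        (volume.restrict (Set.Icc (0:ℝ) 1))), 0 < W p → p.1 < p.2)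
    (hax2 : ∀ᵐ t : ℝ × ℝ × ℝ ∂((volume.restrict (Set.Icc (0:ℝ) 1)).prod
        ((volume.restrict (Set.Icc (0:ℝ) 1)).prod (volume.restrict (Set.Icc (0:ℝ) 1)))),
      0 < W (t.1, t.2.1) → 0 < W (t.2.1, t.2.2) → W (t.1, t.2.2) = 1)
    -- `U₁` is defined by cases: the value of `W` at Lebesgue points of `W`, the value `1`
    -- at density points of `{W = 1}`, and `0` otherwise:
    (U₁ : ℝ × ℝ → ℝ)
    (hU₁leb : ∀ p ∈ unitSq, IsLebPoint W p → U₁ p = W p)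
    (hU₁dens : ∀ p ∈ unitSq, ¬ IsLebPoint W p →
      IsDensityPoint {q ∈ unitSq | W q = 1} p → U₁ p = 1)
    (hU₁zero : ∀ p ∈ unitSq, ¬ IsLebPoint W p →
      ¬ IsDensityPoint {q ∈ unitSq | W q = 1} p → U₁ p = 0) :
    (∀ p ∈ unitSq, 0 < U₁ p → p.1 < p.2) ∧
    (∀ x ∈ Set.Icc (0:ℝ) 1, ∀ y ∈ Set.Icc (0:ℝ) 1, ∀ z ∈ Set.Icc (0:ℝ) 1,
      0 < U₁ (x, y) → 0 < U₁ (y, z) → U₁ (x, z) = 1) ∧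
    (∀ᵐ p ∂(volume.restrict unitSq), U₁ p = W p) := by
  have hW := integrableOn_unitSq_of_mem_Icc hWmeas hWrange
  have hP : NullMeasurableSet {q | 0 < W q} (volume.restrict unitSq) :=
    nullMeasurableSet_lt aemeasurable_const hWmeas
  have hpos : ∀ p ∈ unitSq, 0 < U₁ p → IsDensityPoint {q | 0 < W q} p := by
    intro p hp hU
    by_cases hL : IsLebPoint W p
    · rw [hU₁leb p hp hL] at hU
      exact (hL.isDensityPoint_abs_sub_lt hW hp hU).mono_ae (ae_of_all _
        fun q (hq : |W q - W p| < W p) => show 0 < W q by linarith [(abs_lt.1 hq).1])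
    by_cases hD : IsDensityPoint {q ∈ unitSq | W q = 1} p
    · exact hD.mono_ae (ae_of_all _ fun q hq => by simp [hq.2])
    · exact absurd (hU₁zero p hp hL hD ▸ hU) (lt_irrefl 0)
  refine ⟨fun p hp hU => (hpos p hp hU).fst_lt_snd (volume_restrict_Icc_prod ▸ hax1), ?_, ?_⟩
  · intro x hx y hy z hz hxy hyz
    have hO : IsDensityPoint {q | W q = 1} (x, z) :=
      (hpos _ ⟨hx, hy⟩ hxy).trans hax2 hP hx hy hz (hpos _ ⟨hy, hz⟩ hyz)
    by_cases hL : IsLebPoint W (x, z)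
    · rw [hU₁leb _ ⟨hx, hz⟩ hL]
      exact hL.eq_of_isDensityPoint hW hO fun q hq => hq
    · exact hU₁dens _ ⟨hx, hz⟩ hL (hO.mono_ae
        ((ae_restrict_mem measurableSet_unitSq).mono fun q hq hqO => ⟨hq, hqO⟩))
  · filter_upwards [ae_isLebPoint hW, ae_restrict_mem measurableSet_unitSq] with p hL hp
    exact hU₁leb p hp hL
end

section
/- Let P be a finite poset, U, W : [0,1]² → [0,1] measurable functions, and m the number of related pairs of P (pairs a ≺ b). Then |t(P,U) − t(P,W)| ≤ m·‖U − W‖_□, where ‖·‖_□ is the cut norm. -/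
open MeasureTheory
open scoped Classical

/-- Lebesgue measure restricted to `[0,1]`. -/
noncomputable def lebI : Measure ℝ := volume.restrict (Set.Icc (0:ℝ) 1)

/-- The cut norm of a function on `[0,1]²`: the supremum over Borel sets `S, T ⊆ [0,1]`
of `|∫_{S×T} f|`. -/
noncomputable def cutNorm (f : ℝ × ℝ → ℝ) : ℝ :=
  ⨆ ST : {q : Set ℝ × Set ℝ // MeasurableSet q.1 ∧ MeasurableSet q.2},
    |∫ p in ST.1.1 ×ˢ ST.1.2, f p ∂(lebI.prod lebI)|

/-- The density `t(P, W)` of the finite poset `(P, s)` in a kernel `W` on `[0,1]`. -/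
noncomputable def tDens {P : Type*} [Fintype P] (s : P → P → Prop)
    (W : ℝ → ℝ → ℝ) : ℝ :=
  ∫ x : P → ℝ,
    ∏ q ∈ Finset.univ.filter (fun q : P × P => s q.1 q.2), W (x q.1) (x q.2)
    ∂(Measure.pi fun _ : P => lebI)

/-!
Switch the related pairs of `P` one at a time from the kernel `W` to the kernel `U`; there are `m`
switches, so it suffices to bound each one by `‖U - W‖_□`. Switching the pair `a ≺ b` changes the
density by the integral of `(U - W)(x_a, x_b)` against the product of the other factors. Since `≺`
is irreflexive and transitive, no other related pair joins `a` and `b`, so once the coordinates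
outside `{a, b}` are frozen this product is `u(x_a) v(x_b)` with `u, v` valued in `[0, 1]`. The
integral of `u(x) v(y) f(x, y)` is bilinear in `(u, v)`, hence bounded by its values at
indicator functions, which is exactly the cut norm of `f`.
-/

open Set

instance : IsProbabilityMeasure lebI := by
  constructor
  simp [lebI, Real.volume_Icc]

lemma abs_setIntegral_prod_le_cutNorm {f : ℝ × ℝ → ℝ} (hf : Integrable f (lebI.prod lebI))
    {S T : Set ℝ} (hS : MeasurableSet S) (hT : MeasurableSet T) :
    |∫ p in S ×ˢ T, f p ∂(lebI.prod lebI)| ≤ cutNorm f := by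
  refine le_ciSup (f := fun ST : {q : Set ℝ × Set ℝ // MeasurableSet q.1 ∧ MeasurableSet q.2} =>
    |∫ p in ST.1.1 ×ˢ ST.1.2, f p ∂(lebI.prod lebI)|) ⟨∫ p, |f p| ∂(lebI.prod lebI), ?_⟩
    ⟨(S, T), hS, hT⟩
  rintro _ ⟨ST, rfl⟩
  exact abs_integral_le_integral_abs.trans
    (setIntegral_le_integral hf.abs (ae_of_all _ fun _ => abs_nonneg _))

section UnitIntervalWeight

variable {α : Type*} [MeasurableSpace α] {μ : Measure α} {u g : α → ℝ}

lemma MeasureTheory.Integrable.mul_of_mem_unitInterval (hg : Integrable g μ)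
    (hu : AEStronglyMeasurable u μ) (hu01 : ∀ x, u x ∈ Icc (0 : ℝ) 1) :
    Integrable (fun x => u x * g x) μ :=
  hg.bdd_mul hu (c := 1) (ae_of_all _ fun x => by
    rw [Real.norm_eq_abs, abs_of_nonneg (hu01 x).1]; exact (hu01 x).2)

lemma integral_mul_le_setIntegral_pos (hg : Integrable g μ) (hgm : Measurable g)
    (hu : AEStronglyMeasurable u μ) (hu01 : ∀ x, u x ∈ Icc (0 : ℝ) 1) :
    ∫ x, u x * g x ∂μ ≤ ∫ x in {x | 0 < g x}, g x ∂μ := by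
  have hpos : MeasurableSet {x | 0 < g x} := measurableSet_lt measurable_const hgm
  rw [← integral_indicator hpos]
  refine integral_mono (hg.mul_of_mem_unitInterval hu hu01) (hg.indicator hpos) fun x => ?_
  obtain ⟨hu0, hu1⟩ := hu01 x
  by_cases hgx : 0 < g x
  · simpa [indicator_of_mem (show x ∈ {x | 0 < g x} from hgx)] using
      mul_le_of_le_one_left hgx.le hu1
  · rw [indicator_of_notMem (show x ∉ {x | 0 < g x} from hgx)]
    exact mul_nonpos_of_nonneg_of_nonpos hu0 (not_lt.mp hgx)

lemma exists_measurableSet_abs_integral_mul_le (hg : Integrable g μ) (hgm : Measurable g)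
    (hu : AEStronglyMeasurable u μ) (hu01 : ∀ x, u x ∈ Icc (0 : ℝ) 1) :
    ∃ S, MeasurableSet S ∧ |∫ x, u x * g x ∂μ| ≤ |∫ x in S, g x ∂μ| := by
  rcases le_total 0 (∫ x, u x * g x ∂μ) with hnonneg | hnonpos
  · refine ⟨{x | 0 < g x}, measurableSet_lt measurable_const hgm, ?_⟩
    rw [abs_of_nonneg hnonneg]
    exact (integral_mul_le_setIntegral_pos hg hgm hu hu01).trans (le_abs_self _)
  · refine ⟨{x | 0 < -g x}, measurableSet_lt measurable_const hgm.neg, ?_⟩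
    have := integral_mul_le_setIntegral_pos hg.neg hgm.neg hu hu01
    simp only [Pi.neg_apply, mul_neg, integral_neg] at this
    rw [abs_of_nonpos hnonpos]
    exact this.trans (neg_le_abs _)

end UnitIntervalWeight

lemma abs_integral_mul_mul_le_cutNorm {f : ℝ × ℝ → ℝ} (hfm : Measurable f)
    (hf : Integrable f (lebI.prod lebI)) {u v : ℝ → ℝ} (hu : Measurable u) (hv : Measurable v)
    (hu01 : ∀ x, u x ∈ Icc (0 : ℝ) 1) (hv01 : ∀ y, v y ∈ Icc (0 : ℝ) 1) :
    |∫ p, u p.1 * v p.2 * f p ∂(lebI.prod lebI)| ≤ cutNorm f := by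
  have hv' : AEStronglyMeasurable (fun p : ℝ × ℝ => v p.2) (lebI.prod lebI) :=
    (hv.comp measurable_snd).aestronglyMeasurable
  have hvf := hf.mul_of_mem_unitInterval hv' fun p => hv01 p.2
  set g : ℝ → ℝ := fun x => ∫ y, v y * f (x, y) ∂lebI
  have hint_u : ∫ p, u p.1 * v p.2 * f p ∂(lebI.prod lebI) = ∫ x, u x * g x ∂lebI := by
    have huvf : Integrable (fun p : ℝ × ℝ => u p.1 * (v p.2 * f p)) (lebI.prod lebI) :=
      hvf.mul_of_mem_unitInterval (hu.comp measurable_fst).aestronglyMeasurable fun p => hu01 p.1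
    simp_rw [mul_assoc]
    rw [integral_prod _ huvf]
    simp only [integral_const_mul, g]
  obtain ⟨S, hS, hSle⟩ := exists_measurableSet_abs_integral_mul_le hvf.integral_prod_left
    ((hv.comp measurable_snd).mul hfm).stronglyMeasurable.integral_prod_right'.measurable
    hu.aestronglyMeasurable hu01
  have hfS : Integrable f ((lebI.restrict S).prod lebI) :=
    hf.mono_measure (Measure.prod_mono Measure.restrict_le_self le_rfl)
  set h : ℝ → ℝ := fun y => ∫ x, f (x, y) ∂(lebI.restrict S)
  have hint_v : ∫ x in S, g x ∂lebI = ∫ y, v y * h y ∂lebI := by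
    rw [integral_integral_swap (hfS.mul_of_mem_unitInterval
      (hv.comp measurable_snd).aestronglyMeasurable fun p => hv01 p.2)]
    simp only [integral_const_mul, h]
  obtain ⟨T, hT, hTle⟩ := exists_measurableSet_abs_integral_mul_le hfS.integral_prod_right
    hfm.stronglyMeasurable.integral_prod_left'.measurable hv.aestronglyMeasurable hv01
  have hint_ST : ∫ y in T, h y ∂lebI = ∫ p in S ×ˢ T, f p ∂(lebI.prod lebI) := by
    have hfST : Integrable f ((lebI.restrict S).prod (lebI.restrict T)) := by
      rw [Measure.prod_restrict]
      exact hf.restrict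
    rw [← Measure.prod_restrict, integral_prod_symm _ hfST]
  calc |∫ p, u p.1 * v p.2 * f p ∂(lebI.prod lebI)|
      ≤ |∫ x in S, g x ∂lebI| := hint_u ▸ hSle
    _ ≤ |∫ y in T, h y ∂lebI| := hint_v ▸ hTle
    _ ≤ cutNorm f := hint_ST ▸ abs_setIntegral_prod_le_cutNorm hf hS hT

section Split

variable {P : Type*} {a b : P} {α : Type*} [MeasurableSpace α]

noncomputable def pairEquiv (hab : a ≠ b) : Fin 2 ≃ {i : P // i = a ∨ i = b} where
  toFun j := if j = 0 then ⟨a, Or.inl rfl⟩ else ⟨b, Or.inr rfl⟩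
  invFun i := if i.1 = a then 0 else 1
  left_inv j := by fin_cases j <;> simp [hab.symm]
  right_inv i := by rcases i with ⟨i, rfl | rfl⟩ <;> simp [hab.symm]

/-- `((x_a, x_b), z) ↦ x`, where `z` lists the remaining coordinates of `x`. -/
noncomputable def splitEquiv (hab : a ≠ b) :
    ((α × α) × ({i : P // ¬ (i = a ∨ i = b)} → α)) ≃ᵐ (P → α) :=
  (((MeasurableEquiv.piFinTwo fun _ => α).symm.trans
      (MeasurableEquiv.piCongrLeft (fun _ => α) (pairEquiv hab))).prodCongr
    (MeasurableEquiv.refl _)).trans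
    (MeasurableEquiv.piEquivPiSubtypeProd (fun _ => α) (fun i => i = a ∨ i = b)).symm

lemma splitEquiv_apply_left (hab : a ≠ b) (w : α × α) (z : {i : P // ¬ (i = a ∨ i = b)} → α) :
    splitEquiv hab (w, z) a = w.1 :=
  (dif_pos (Or.inl rfl)).trans <| MeasurableEquiv.piCongrLeft_apply_apply (β := fun _ => α)
    (pairEquiv hab) ((MeasurableEquiv.piFinTwo fun _ => α).symm w) 0

lemma splitEquiv_apply_right (hab : a ≠ b) (w : α × α)
    (z : {i : P // ¬ (i = a ∨ i = b)} → α) :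
    splitEquiv hab (w, z) b = w.2 := by
  have hb : (⟨b, Or.inr rfl⟩ : {i : P // i = a ∨ i = b}) = pairEquiv hab 1 :=
    Subtype.ext (by simp [pairEquiv])
  refine (dif_pos (Or.inr rfl)).trans ?_
  rw [hb]
  exact MeasurableEquiv.piCongrLeft_apply_apply (β := fun _ => α) (pairEquiv hab)
    ((MeasurableEquiv.piFinTwo fun _ => α).symm w) 1

lemma splitEquiv_apply_of_not_or (hab : a ≠ b) (w : α × α)
    (z : {i : P // ¬ (i = a ∨ i = b)} → α) {i : P} (hi : ¬ (i = a ∨ i = b)) :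
    splitEquiv hab (w, z) i = z ⟨i, hi⟩ :=
  dif_neg hi

lemma splitEquiv_apply_eq_of_ne_right (hab : a ≠ b) (s t t' : α)
    (z : {i : P // ¬ (i = a ∨ i = b)} → α) {i : P} (hi : i ≠ b) :
    splitEquiv hab ((s, t), z) i = splitEquiv hab ((s, t'), z) i := by
  by_cases hia : i = a
  · subst hia
    rw [splitEquiv_apply_left, splitEquiv_apply_left]
  · rw [splitEquiv_apply_of_not_or hab _ _ (by tauto), splitEquiv_apply_of_not_or]

lemma splitEquiv_apply_eq_of_ne_left (hab : a ≠ b) (s s' t : α)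
    (z : {i : P // ¬ (i = a ∨ i = b)} → α) {i : P} (hi : i ≠ a) :
    splitEquiv hab ((s, t), z) i = splitEquiv hab ((s', t), z) i := by
  by_cases hib : i = b
  · subst hib
    rw [splitEquiv_apply_right, splitEquiv_apply_right]
  · rw [splitEquiv_apply_of_not_or hab _ _ (by tauto), splitEquiv_apply_of_not_or]

variable [Fintype P] (μ : Measure α) [SigmaFinite μ]

lemma measurePreserving_splitEquiv (hab : a ≠ b) :
    MeasurePreserving (splitEquiv hab) ((μ.prod μ).prod (Measure.pi fun _ => μ))
      (Measure.pi fun _ : P => μ) :=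
  (measurePreserving_piEquivPiSubtypeProd (fun _ => μ) _).symm.comp
    (((measurePreserving_piCongrLeft (fun _ => μ) (pairEquiv hab)).comp
      (measurePreserving_piFinTwo fun _ => μ).symm).prod (MeasurePreserving.id _))

lemma integral_pi_eq_integral_splitEquiv (hab : a ≠ b) {F : (P → α) → ℝ}
    (hF : Integrable F (Measure.pi fun _ => μ)) :
    ∫ x, F x ∂(Measure.pi fun _ => μ) =
      ∫ z, ∫ w, F (splitEquiv hab (w, z)) ∂(μ.prod μ) ∂(Measure.pi fun _ => μ) := by
  have hΦ := measurePreserving_splitEquiv μ hab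
  rw [← hΦ.integral_comp (splitEquiv hab).measurableEmbedding]
  exact integral_prod_symm (F ∘ splitEquiv hab)
    ((hΦ.integrable_comp_emb (splitEquiv hab).measurableEmbedding).2 hF)

end Split

lemma abs_integral_mul_mul_apply_le_cutNorm {P : Type*} [Fintype P] {a b : P} (hab : a ≠ b)
    {g h : (P → ℝ) → ℝ}
    (hgm : Measurable g) (hhm : Measurable h)
    (hg01 : ∀ x, g x ∈ Icc (0 : ℝ) 1) (hh01 : ∀ x, h x ∈ Icc (0 : ℝ) 1)
    (hg : ∀ x y, (∀ i, i ≠ b → x i = y i) → g x = g y)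
    (hh : ∀ x y, (∀ i, i ≠ a → x i = y i) → h x = h y)
    {f : ℝ × ℝ → ℝ} (hfm : Measurable f) (hf : Integrable f (lebI.prod lebI)) :
    |∫ x, g x * h x * f (x a, x b) ∂(Measure.pi fun _ => lebI)| ≤ cutNorm f := by
  have hΦ := measurePreserving_splitEquiv (P := P) lebI hab
  have hint : Integrable (fun x => g x * h x * f (x a, x b)) (Measure.pi fun _ => lebI) := by
    rw [← hΦ.integrable_comp_emb (splitEquiv hab).measurableEmbedding]
    have hgh := (hgm.mul hhm).comp (splitEquiv (P := P) hab).measurable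
    refine ((hf.comp_fst _).mul_of_mem_unitInterval hgh.aestronglyMeasurable
      fun q => unitInterval.mul_mem (hg01 _) (hh01 _)).congr (ae_of_all _ fun ⟨w, z⟩ => ?_)
    simp [splitEquiv_apply_left, splitEquiv_apply_right]
  have hinner : ∀ z, |∫ w, g (splitEquiv hab (w, z)) * h (splitEquiv hab (w, z)) *
      f (splitEquiv hab (w, z) a, splitEquiv hab (w, z) b) ∂(lebI.prod lebI)| ≤ cutNorm f := by
    intro z
    have hfactor : ∀ w : ℝ × ℝ, g (splitEquiv hab (w, z)) * h (splitEquiv hab (w, z)) *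
        f (splitEquiv hab (w, z) a, splitEquiv hab (w, z) b) =
          g (splitEquiv hab ((w.1, 0), z)) * h (splitEquiv hab ((0, w.2), z)) * f w := by
      rintro ⟨s, t⟩
      rw [splitEquiv_apply_left, splitEquiv_apply_right,
        hg _ _ fun i hi => splitEquiv_apply_eq_of_ne_right hab s t 0 z hi,
        hh _ _ fun i hi => splitEquiv_apply_eq_of_ne_left hab s 0 t z hi]
    have hu : Measurable fun s : ℝ => g (splitEquiv hab ((s, 0), z)) :=
      hgm.comp ((splitEquiv hab).measurable.comp (by fun_prop))
    have hv : Measurable fun t : ℝ => h (splitEquiv hab ((0, t), z)) :=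
      hhm.comp ((splitEquiv hab).measurable.comp (by fun_prop))
    simp_rw [hfactor]
    exact abs_integral_mul_mul_le_cutNorm hfm hf hu hv (fun _ => hg01 _) (fun _ => hh01 _)
  rw [integral_pi_eq_integral_splitEquiv lebI hab hint]
  simpa using norm_integral_le_of_norm_le_const
    (μ := Measure.pi fun _ : {i : P // ¬ (i = a ∨ i = b)} => lebI)
    (ae_of_all _ fun z => (Real.norm_eq_abs _).trans_le (hinner z))

section KernelProduct

variable {P : Type*} {K : P × P → ℝ → ℝ → ℝ}

lemma measurable_prod_kernel (hK : ∀ q, Measurable fun p : ℝ × ℝ => K q p.1 p.2)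
    (D : Finset (P × P)) : Measurable fun x : P → ℝ => ∏ q ∈ D, K q (x q.1) (x q.2) :=
  Finset.measurable_prod _ fun q _ =>
    (hK q).comp (by fun_prop : Measurable fun x : P → ℝ => (x q.1, x q.2))

lemma prod_kernel_mem_Icc (hK01 : ∀ q x y, K q x y ∈ Icc (0 : ℝ) 1) (D : Finset (P × P))
    (x : P → ℝ) : ∏ q ∈ D, K q (x q.1) (x q.2) ∈ Icc (0 : ℝ) 1 :=
  ⟨Finset.prod_nonneg fun q _ => (hK01 q _ _).1,
    Finset.prod_le_one (fun q _ => (hK01 q _ _).1) fun q _ => (hK01 q _ _).2⟩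

lemma integrable_prod_kernel (hK : ∀ q, Measurable fun p : ℝ × ℝ => K q p.1 p.2)
    (hK01 : ∀ q x y, K q x y ∈ Icc (0 : ℝ) 1) (D : Finset (P × P)) (μ : Measure (P → ℝ))
    [IsFiniteMeasure μ] : Integrable (fun x : P → ℝ => ∏ q ∈ D, K q (x q.1) (x q.2)) μ :=
  .of_bound (measurable_prod_kernel hK D).aestronglyMeasurable 1 (ae_of_all _ fun x => by
    rw [Real.norm_eq_abs, abs_of_nonneg (prod_kernel_mem_Icc hK01 D x).1]
    exact (prod_kernel_mem_Icc hK01 D x).2)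

/-- Once the coordinates outside `{a, b}` are frozen, the product splits into the factors avoiding
`b`, a function of `x a`, and those containing `b`, which by `hD` avoid `a`. -/
lemma abs_integral_prod_kernel_mul_le_cutNorm [Fintype P] {a b : P} (hab : a ≠ b)
    {D : Finset (P × P)} (hD : ∀ q ∈ D, q.1 = b ∨ q.2 = b → q.1 ≠ a ∧ q.2 ≠ a)
    (hK : ∀ q, Measurable fun p : ℝ × ℝ => K q p.1 p.2) (hK01 : ∀ q x y, K q x y ∈ Icc (0 : ℝ) 1)
    {f : ℝ × ℝ → ℝ} (hfm : Measurable f) (hf : Integrable f (lebI.prod lebI)) :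
    |∫ x, (∏ q ∈ D, K q (x q.1) (x q.2)) * f (x a, x b) ∂(Measure.pi fun _ => lebI)| ≤
      cutNorm f := by
  have hsplit : ∀ x : P → ℝ, ∏ q ∈ D, K q (x q.1) (x q.2) =
      (∏ q ∈ D with q.1 ≠ b ∧ q.2 ≠ b, K q (x q.1) (x q.2)) *
        ∏ q ∈ D with ¬ (q.1 ≠ b ∧ q.2 ≠ b), K q (x q.1) (x q.2) :=
    fun x => (Finset.prod_filter_mul_prod_filter_not _ _ _).symm
  simp only [hsplit]
  refine abs_integral_mul_mul_apply_le_cutNorm hab (measurable_prod_kernel hK _)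
    (measurable_prod_kernel hK _) (prod_kernel_mem_Icc hK01 _) (prod_kernel_mem_Icc hK01 _)
    (fun x y hxy => Finset.prod_congr rfl fun q hq => ?_)
    (fun x y hxy => Finset.prod_congr rfl fun q hq => ?_) hfm hf
  · obtain ⟨-, h1, h2⟩ := Finset.mem_filter.1 hq
    rw [hxy _ h1, hxy _ h2]
  · obtain ⟨hqD, hqb⟩ := Finset.mem_filter.1 hq
    obtain ⟨h1, h2⟩ := hD q hqD (by tauto)
    rw [hxy _ h1, hxy _ h2]

end KernelProduct

lemma abs_sub_le_card_mul_of_abs_insert_sub_le {ι : Type*} [DecidableEq ι] {E : Finset ι}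
    {φ : Finset ι → ℝ} {c : ℝ} (hφ : ∀ e ∈ E, ∀ A ⊆ E, e ∉ A → |φ (insert e A) - φ A| ≤ c)
    {A : Finset ι} (hA : A ⊆ E) : |φ A - φ ∅| ≤ A.card * c := by
  induction A using Finset.induction_on with
  | empty => simp
  | insert e A heA ih =>
    have hAE : A ⊆ E := (Finset.subset_insert e A).trans hA
    rw [Finset.card_insert_of_notMem heA, Nat.cast_succ, add_one_mul]
    calc |φ (insert e A) - φ ∅| ≤ |φ A - φ ∅| + |φ (insert e A) - φ A| := by
          rw [add_comm]; exact abs_sub_le _ _ _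
      _ ≤ A.card * c + c :=
          add_le_add (ih hAE) (hφ e (hA (Finset.mem_insert_self e A)) A hAE heA)

section Hybrid

variable {P : Type*} [Fintype P] (s : P → P → Prop) (U W : ℝ → ℝ → ℝ)

noncomputable def hybridDens (A : Finset (P × P)) : ℝ :=
  ∫ x : P → ℝ, ∏ q ∈ Finset.univ.filter (fun q : P × P => s q.1 q.2),
    (if q ∈ A then U else W) (x q.1) (x q.2) ∂(Measure.pi fun _ : P => lebI)

lemma tDens_eq_hybridDens_filter :
    tDens s U = hybridDens s U W (Finset.univ.filter fun q : P × P => s q.1 q.2) :=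
  integral_congr_ae (ae_of_all _ fun _ => Finset.prod_congr rfl fun _ hq => by rw [if_pos hq])

lemma tDens_eq_hybridDens_empty : tDens s W = hybridDens s U W ∅ :=
  integral_congr_ae (ae_of_all _ fun _ => Finset.prod_congr rfl fun _ _ => by
    rw [if_neg (Finset.notMem_empty _)])

lemma abs_hybridDens_insert_sub_le (hs_irr : ∀ a, ¬ s a a)
    (hs_trans : ∀ a b c, s a b → s b c → s a c)
    (hUm : Measurable fun p : ℝ × ℝ => U p.1 p.2) (hWm : Measurable fun p : ℝ × ℝ => W p.1 p.2)
    (hU01 : ∀ x y, U x y ∈ Icc (0 : ℝ) 1) (hW01 : ∀ x y, W x y ∈ Icc (0 : ℝ) 1)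
    {e : P × P} (he : s e.1 e.2) {A : Finset (P × P)} (heA : e ∉ A) :
    |hybridDens s U W (insert e A) - hybridDens s U W A| ≤
      cutNorm fun p : ℝ × ℝ => U p.1 p.2 - W p.1 p.2 := by
  have hkernel : ∀ B : Finset (P × P), (∀ q, Measurable fun p : ℝ × ℝ =>
      (if q ∈ B then U else W) p.1 p.2) ∧ ∀ q x y, (if q ∈ B then U else W) x y ∈ Icc (0 : ℝ) 1 :=
    fun B => ⟨fun q => by split_ifs <;> assumption, fun q => by split_ifs <;> assumption⟩
  have hf : Integrable (fun p : ℝ × ℝ => U p.1 p.2 - W p.1 p.2) (lebI.prod lebI) :=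
    .of_bound (hUm.sub hWm).aestronglyMeasurable 1 (ae_of_all _ fun p => by
      obtain ⟨hU0, hU1⟩ := hU01 p.1 p.2
      obtain ⟨hW0, hW1⟩ := hW01 p.1 p.2
      rw [Real.norm_eq_abs, abs_sub_le_iff]
      constructor <;> linarith)
  rw [hybridDens, hybridDens,
    ← integral_sub (integrable_prod_kernel (hkernel _).1 (hkernel _).2 _ _)
      (integrable_prod_kernel (hkernel _).1 (hkernel _).2 _ _)]
  set E := Finset.univ.filter fun q : P × P => s q.1 q.2
  have heE : e ∈ E := Finset.mem_filter.2 ⟨Finset.mem_univ _, he⟩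
  have hdiff : ∀ x : P → ℝ,
      ∏ q ∈ E, (if q ∈ insert e A then U else W) (x q.1) (x q.2) -
        ∏ q ∈ E, (if q ∈ A then U else W) (x q.1) (x q.2) =
      (∏ q ∈ E.erase e, (if q ∈ A then U else W) (x q.1) (x q.2)) *
        (U (x e.1) (x e.2) - W (x e.1) (x e.2)) := by
    intro x
    rw [← Finset.mul_prod_erase E _ heE, ← Finset.mul_prod_erase E _ heE,
      Finset.prod_congr rfl fun q hq => by rw [if_congr (Finset.mem_insert.trans
        (or_iff_right (Finset.ne_of_mem_erase hq))) rfl rfl]]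
    simp only [Finset.mem_insert_self, if_true, heA, if_false]
    ring
  simp only [hdiff]
  have hab : e.1 ≠ e.2 := fun h => hs_irr e.1 (h ▸ he)
  refine abs_integral_prod_kernel_mul_le_cutNorm hab (fun q hq hqb => ?_) (hkernel A).1
    (hkernel A).2 (hUm.sub hWm) hf
  obtain ⟨hqe, hqE⟩ := Finset.mem_erase.1 hq
  have hq : s q.1 q.2 := (Finset.mem_filter.1 hqE).2
  rcases hqb with h1 | h2
  · refine ⟨h1 ▸ hab.symm, fun h2 => hs_irr e.1 (hs_trans _ _ _ he ?_)⟩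
    rwa [← h1, ← h2]
  · exact ⟨fun h1 => hqe (Prod.ext h1 h2), h2 ▸ hab.symm⟩

end Hybrid

theorem stmt19 {P : Type*} [Fintype P] (s : P → P → Prop)
    (hs_irr : ∀ a, ¬ s a a) (hs_trans : ∀ a b c, s a b → s b c → s a c)
    (U W : ℝ → ℝ → ℝ)
    (hUmeas : Measurable (fun p : ℝ × ℝ => U p.1 p.2))
    (hWmeas : Measurable (fun p : ℝ × ℝ => W p.1 p.2))
    (hUrange : ∀ x y, U x y ∈ Set.Icc (0:ℝ) 1)
    (hWrange : ∀ x y, W x y ∈ Set.Icc (0:ℝ) 1) :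
    |tDens s U - tDens s W| ≤
      ((Finset.univ.filter (fun q : P × P => s q.1 q.2)).card : ℝ) *
        cutNorm (fun p : ℝ × ℝ => U p.1 p.2 - W p.1 p.2) := by
  rw [tDens_eq_hybridDens_filter s U W, tDens_eq_hybridDens_empty s U W]
  exact abs_sub_le_card_mul_of_abs_insert_sub_le (fun e he A _ heA =>
    abs_hybridDens_insert_sub_le s U W hs_irr hs_trans hUmeas hWmeas hUrange hWrange
      (Finset.mem_filter.1 he).2 heA) subset_rfl
end
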